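/- arXiv:quant-ph/0203112 — 5 statements merged into one kernel-verified Lean document; each statement's English description precedes it below -/
import Mathlib

section
/- Let n, k, i be natural numbers with 1 ≤ i ≤ k and 2k ≤ n, let K denote the subtype {S : Finset (Fin n) // S.card = k}, and let M : Matrix K K ℝ be the disjointness matrix. Let x : Fin (2i) → Fin n be an injective function, and define e : K → ℝ by: e S = 0 if there exists j : Fin i such that the cardinality of S ∩ {x(2j), x(2j+1)} is not equal to 1, and otherwise e S = ∏_{j : Fin i} (−1)^(card(S ∩ {x(2j+1)})) (i.e., a factor of −1 for each j with x(2j+1) ∈ S). Then M.mulVec e = ((−1)^i · C(n−k−i, k−i)) • e. -/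
/-!
Write `e T = ∏ j, (1_T (a j) - 1_T (b j))` for the pairs `{a j, b j}`. If `S` does not split
some pair, the transposition of that pair fixes `S`, preserves disjointness and negates `e`, so
both `(M e) S` and `e S` vanish. If `S` splits every pair, let `c j` be the point of the `j`-th
pair outside `S`: a `k`-set `T` disjoint from `S` has `e T = (-1)^i e S` if it contains every
`c j` and `e T = 0` otherwise, and there are `C(n-k-i, k-i)` such sets `T` in the complement
of `S`.
-/

open Finset Function Matrix

/-- The disjointness (Kneser) matrix on `k`-element subsets of `Fin n`. -/
def disjMatrix (n k : ℕ) :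
    Matrix {S : Finset (Fin n) // S.card = k} {S : Finset (Fin n) // S.card = k} ℝ :=
  Matrix.of fun S T => if Disjoint S.1 T.1 then 1 else 0

theorem Matrix.mulVec_apply_eq_zero_of_perm_antiinvariant {m R : Type*} [Fintype m]
    [NonAssocRing R] [NoZeroDivisors R] [CharZero R] (M : Matrix m m R) (σ : Equiv.Perm m)
    (hM : ∀ s t, M (σ s) (σ t) = M s t) {v : m → R} (hv : ∀ t, v (σ t) = -v t) {s : m}
    (hs : σ s = s) : (M *ᵥ v) s = 0 := by
  refine CharZero.eq_neg_self_iff.mp ?_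
  calc (M *ᵥ v) s = ∑ t, M (σ s) (σ t) * v (σ t) := by
        rw [hs, mulVec_apply_eq_sum]; exact (Equiv.sum_comp σ fun t => M s t * v t).symm
    _ = -(M *ᵥ v) s := by simp [hM, hv, mulVec_apply_eq_sum]

section KneserMatrix

variable {n k : ℕ}

def finsetCardPerm {α : Type*} (σ : Equiv.Perm α) : Equiv.Perm {S : Finset α // S.card = k} :=
  σ.finsetCongr.subtypeEquiv fun S => by simp

theorem disjMatrix_finsetCardPerm (σ : Equiv.Perm (Fin n)) (S T) :
    disjMatrix n k (finsetCardPerm σ S) (finsetCardPerm σ T) = disjMatrix n k S T := by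
  simp [disjMatrix, finsetCardPerm]

theorem disjMatrix_mulVec_apply (f : Finset (Fin n) → ℝ)
    (S : {S : Finset (Fin n) // S.card = k}) :
    (disjMatrix n k *ᵥ fun T => f T.1) S = ∑ T ∈ powersetCard k S.1ᶜ, f T := by
  have hK : ∀ T : Finset (Fin n), T ∈ powersetCard k univ ↔ T.card = k := by simp
  rw [mulVec_apply_eq_sum]
  simp only [disjMatrix, Matrix.of_apply, ite_mul, one_mul, zero_mul]
  rw [← sum_subtype _ hK (fun T => if Disjoint S.1 T then f T else 0), ← sum_filter]
  congr 1
  ext T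
  simp [subset_compl_iff_disjoint_left, and_comm]

end KneserMatrix

theorem Finset.map_swap_eq_self {α : Type*} [DecidableEq α] {s : Finset α} {u v : α}
    (h : u ∈ s ↔ v ∈ s) : s.map (Equiv.swap u v).toEmbedding = s := by
  ext w
  rw [mem_map_equiv, Equiv.symm_swap]
  rcases eq_or_ne w u with rfl | hu
  · rw [Equiv.swap_apply_left, h]
  rcases eq_or_ne w v with rfl | hv
  · rw [Equiv.swap_apply_right, h]
  rw [Equiv.swap_apply_of_ne_of_ne hu hv]

section LovaszVector

variable {α ι : Type*} [DecidableEq α]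

def outsidePoint (a b : ι → α) (S : Finset α) (j : ι) : α := if a j ∈ S then b j else a j

theorem outsidePoint_injective {a b : ι → α} (hab : Injective (Sum.elim a b))
    (S : Finset α) : Injective (outsidePoint a b S) := by
  have : outsidePoint a b S = Sum.elim a b ∘ fun j => if a j ∈ S then .inr j else .inl j := by
    ext j; by_cases h : a j ∈ S <;> simp [outsidePoint, h]
  rw [this]
  refine hab.comp fun j j' h => ?_
  split_ifs at h <;> simpa using h

theorem outsidePoint_notMem {a b : ι → α} {S : Finset α} (hS : ∀ j, a j ∈ S ↔ b j ∉ S)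
    (j : ι) : outsidePoint a b S j ∉ S := by
  unfold outsidePoint; split_ifs with h
  · exact (hS j).mp h
  · exact h

variable [Fintype ι]

-- A factor is `0` unless `T` splits `{a j, b j}`, and `-1` exactly when `b j ∈ T`.
def lovaszVector (a b : ι → α) (T : Finset α) : ℝ :=
  ∏ j, ((if a j ∈ T then 1 else 0) - (if b j ∈ T then 1 else 0))

theorem lovaszVector_eq_ite {a b : ι → α} (hab : ∀ j, a j ≠ b j) (T : Finset α) :
    lovaszVector a b T = if ∃ j, (T ∩ {a j, b j}).card ≠ 1 then 0
      else ∏ j, (-1 : ℝ) ^ (T ∩ {b j}).card := by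
  have hfactor : ∀ j, ((if a j ∈ T then 1 else 0) - (if b j ∈ T then 1 else 0) : ℝ) =
      if (T ∩ {a j, b j}).card = 1 then (-1 : ℝ) ^ (T ∩ {b j}).card else 0 := by
    intro j
    by_cases ha : a j ∈ T <;> by_cases hb : b j ∈ T <;>
      simp [ha, hb, hab j, inter_insert_of_mem, inter_insert_of_notMem]
  simp only [lovaszVector, hfactor, Fintype.prod_ite_zero, ne_eq, ← not_forall, ite_not]

theorem lovaszVector_map_swap {a b : ι → α} (hab : Injective (Sum.elim a b)) (j₀ : ι)
    (T : Finset α) :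
    lovaszVector a b (T.map (Equiv.swap (a j₀) (b j₀)).toEmbedding) = -lovaszVector a b T := by
  classical
  have hswap (p : ι ⊕ ι) : Equiv.swap (a j₀) (b j₀) (Sum.elim a b p) =
      Sum.elim a b (Equiv.swap (.inl j₀) (.inr j₀) p) :=
    hab.swap_apply (.inl j₀) (.inr j₀) p
  simp only [lovaszVector, mem_map_equiv, Equiv.symm_swap]
  rw [← mul_prod_erase univ _ (mem_univ j₀), ← mul_prod_erase univ _ (mem_univ j₀),
    Equiv.swap_apply_left, Equiv.swap_apply_right, prod_congr rfl fun j hj => ?_]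
  · ring
  · have ha := hswap (.inl j)
    have hb := hswap (.inr j)
    simp only [Sum.elim_inl, Sum.elim_inr, Equiv.swap_apply_of_ne_of_ne, ne_eq, Sum.inl.injEq,
      Sum.inr.injEq, reduceCtorEq, not_false_eq_true, ne_of_mem_erase hj] at ha hb
    rw [ha, hb]

theorem lovaszVector_of_disjoint {a b : ι → α} {S T : Finset α}
    (hS : ∀ j, a j ∈ S ↔ b j ∉ S) (hST : Disjoint S T) :
    lovaszVector a b T = (-1) ^ Fintype.card ι * lovaszVector a b S *
      if univ.image (outsidePoint a b S) ⊆ T then 1 else 0 := by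
  have hfactor : ∀ j, ((if a j ∈ T then 1 else 0) - (if b j ∈ T then 1 else 0) : ℝ) =
      -1 * ((if a j ∈ S then 1 else 0) - (if b j ∈ S then 1 else 0)) *
        if outsidePoint a b S j ∈ T then 1 else 0 := by
    intro j
    have hdisj : ∀ u ∈ S, u ∉ T := fun u hu => disjoint_left.mp hST hu
    by_cases ha : a j ∈ S
    · by_cases hbT : b j ∈ T <;> simp [outsidePoint, ha, (hS j).mp ha, hdisj _ ha, hbT]
    · have hb : b j ∈ S := by simpa [ha] using (hS j).not
      simp [outsidePoint, ha, hb, hdisj _ hb]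
  simp only [lovaszVector, hfactor, prod_mul_distrib, prod_const, card_univ, Fintype.prod_boole,
    image_subset_iff, mem_univ, true_implies]

end LovaszVector

theorem disjMatrix_mulVec_lovaszVector {ι : Type*} [Fintype ι] {n k : ℕ} {a b : ι → Fin n}
    (hab : Injective (Sum.elim a b)) (hk : Fintype.card ι ≤ k) :
    disjMatrix n k *ᵥ (fun S => lovaszVector a b S.1) =
      ((-1) ^ Fintype.card ι * ((n - k - Fintype.card ι).choose (k - Fintype.card ι) : ℝ)) •
        fun S => lovaszVector a b S.1 := by
  funext S
  by_cases hS : ∀ j, a j ∈ S.1 ↔ b j ∉ S.1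
  · have hC : univ.image (outsidePoint a b S.1) ⊆ S.1ᶜ := by
      simpa [image_subset_iff] using outsidePoint_notMem hS
    have hCcard : (univ.image (outsidePoint a b S.1)).card = Fintype.card ι :=
      card_image_of_injective _ (outsidePoint_injective hab S.1)
    rw [disjMatrix_mulVec_apply, sum_congr rfl fun T hT => lovaszVector_of_disjoint hS
      (subset_compl_iff_disjoint_left.mp (mem_powersetCard.mp hT).1), ← mul_sum, sum_boole,
      card_filter_powersetCard_subset _ _ _ hC (hCcard ▸ hk), card_compl, S.2, hCcard]
    simp only [Fintype.card_fin, Pi.smul_apply, smul_eq_mul]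
    ring
  · obtain ⟨j, hj⟩ : ∃ j, (a j ∈ S.1 ↔ b j ∈ S.1) := by
      simpa [not_iff, not_iff_not] using hS
    set σ := finsetCardPerm (k := k) (Equiv.swap (a j) (b j))
    have hσS : σ S = S := Subtype.ext (map_swap_eq_self hj)
    have hv : ∀ T, lovaszVector a b (σ T).1 = -lovaszVector a b T.1 := fun T =>
      lovaszVector_map_swap hab j T.1
    have heS : lovaszVector a b S.1 = 0 :=
      CharZero.eq_neg_self_iff.mp (by simpa [hσS] using hv S)
    rw [Pi.smul_apply, heS, smul_zero]
    exact mulVec_apply_eq_zero_of_perm_antiinvariant _ σ (disjMatrix_finsetCardPerm _) hv hσS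

theorem disjMatrix_mulVec_lovasz_eigenvector (n k i : ℕ)
    (hik : i ≤ k)
    (x : Fin (2 * i) → Fin n) (hx : Function.Injective x)
    (e : {S : Finset (Fin n) // S.card = k} → ℝ)
    (he : ∀ S, e S =
      if ∃ j : Fin i,
          (S.1 ∩ {x ⟨2 * j.val, by have := j.isLt; omega⟩,
                  x ⟨2 * j.val + 1, by have := j.isLt; omega⟩}).card ≠ 1
      then 0
      else ∏ j : Fin i,
        (-1 : ℝ) ^ (S.1 ∩ {x ⟨2 * j.val + 1, by have := j.isLt; omega⟩}).card) :
    (disjMatrix n k).mulVec e =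
      ((-1 : ℝ) ^ i * ((n - k - i).choose (k - i) : ℝ)) • e := by
  set a : Fin i → Fin n := fun j => x ⟨2 * j.val, by omega⟩
  set b : Fin i → Fin n := fun j => x ⟨2 * j.val + 1, by omega⟩
  have hab : Injective (Sum.elim a b) := by
    rintro (j | j) (j' | j') h <;> have h' := Fin.val_eq_of_eq (hx h) <;>
      simp only [Sum.inl.injEq, Sum.inr.injEq, reduceCtorEq] at h' ⊢
      <;> omega
  have hne : ∀ j, a j ≠ b j := fun j => hab.ne (Sum.inl_ne_inr : Sum.inl j ≠ Sum.inr j)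
  have he' : e = fun S => lovaszVector a b S.1 := funext fun S => by
    rw [he S, lovaszVector_eq_ite hne]
    congr
  simpa [he'] using disjMatrix_mulVec_lovaszVector hab (by simpa using hik)
end

section
/- Let n, k, i be natural numbers with 1 ≤ i ≤ k and n ≥ 2k + 1, let K denote the subtype {S : Finset (Fin n) // S.card = k}, and let M : Matrix K K ℝ be the disjointness matrix, viewed as an ℝ-linear endomorphism of K → ℝ. Then the eigenspace of this endomorphism for the eigenvalue (−1)^i · C(n−k−i, k−i) has dimension (finrank over ℝ) exactly C(n, i) − C(n, i−1). -/
open Finset Matrix Module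

abbrev Slice (α : Type*) (m : ℕ) := {S : Finset α // S.card = m}

theorem Fintype.sum_boole_mul_boole {ι R : Type*} [Fintype ι] [NonAssocSemiring R]
    (p q : ι → Prop) [DecidablePred p] [DecidablePred q] :
    ∑ x, (if p x then (1 : R) else 0) * (if q x then 1 else 0) = #{x | p x ∧ q x} := by
  simp only [ite_zero_mul_ite_zero, mul_one, sum_boole]

theorem sum_range_neg_one_pow_mul_choose {R : Type*} [Ring R] {t c : ℕ} (htc : t ≤ c) :
    ∑ j ∈ range (c + 1), (-1 : R) ^ j * t.choose j = if t = 0 then 1 else 0 := by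
  rw [← sum_subset (range_mono (by omega : t + 1 ≤ c + 1)) fun j _ hj => by
    rw [Nat.choose_eq_zero_of_lt (by simpa using hj), Nat.cast_zero, mul_zero]]
  have h := congrArg (Int.cast : ℤ → R) (Int.alternating_sum_range_choose (n := t))
  push_cast at h
  exact h

namespace Slice

variable {α : Type*}

theorem finrank_fun [Fintype α] (m : ℕ) :
    finrank ℝ (Slice α m → ℝ) = (Fintype.card α).choose m := by
  rw [Module.finrank_fintype_fun_eq_card, Fintype.card_finset_len]

variable [DecidableEq α]

variable (α) in
def inclusionMatrix (a b : ℕ) : Matrix (Slice α a) (Slice α b) ℝ :=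
  of fun S T => if S.1 ⊆ T.1 then 1 else 0

variable (α) in
def disjointnessMatrix (a b : ℕ) : Matrix (Slice α a) (Slice α b) ℝ :=
  of fun S T => if Disjoint S.1 T.1 then 1 else 0

theorem inclusionMatrix_self (a : ℕ) : inclusionMatrix α a a = 1 := by
  ext S T
  have : S.1 ⊆ T.1 ↔ S = T := ⟨fun h => Subtype.ext (eq_of_subset_of_card_le h (by rw [S.2, T.2])),
    fun h => h ▸ subset_rfl⟩
  simp only [inclusionMatrix, one_apply, of_apply, this]

variable [Fintype α]

theorem card_filter_subset_disjoint {m : ℕ} {A B : Finset α} (hAB : Disjoint A B)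
    (hA : #A ≤ m) :
    #{T : Slice α m | A ⊆ T.1 ∧ Disjoint B T.1} = (Fintype.card α - #A - #B).choose (m - #A) := by
  rw [Nat.sub_sub, ← card_union_of_disjoint hAB, ← card_compl, ← card_powersetCard]
  have mem : ∀ C : Finset α, C ∈ powersetCard (m - #A) (A ∪ B)ᶜ ↔
      (Disjoint C A ∧ Disjoint C B) ∧ #C = m - #A := by
    simp only [mem_powersetCard, subset_compl_iff_disjoint_right, disjoint_union_right,
      implies_true]
  refine card_bij' (fun T _ => T.1 \ A) (fun C hC => ⟨C ∪ A, ?_⟩) ?_ ?_ ?_ ?_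
  · rw [mem] at hC
    rw [card_union_of_disjoint hC.1.1, hC.2]
    omega
  · intro T hT
    simp only [mem_filter, mem_univ, true_and] at hT
    rw [mem, card_sdiff_of_subset hT.1, T.2]
    exact ⟨⟨sdiff_disjoint, (hT.2.mono_right sdiff_subset).symm⟩, rfl⟩
  · intro C hC
    rw [mem] at hC
    simp only [mem_filter, mem_univ, true_and]
    exact ⟨subset_union_right, disjoint_union_right.2 ⟨hC.1.2.symm, hAB.symm⟩⟩
  · intro T hT
    simp only [mem_filter, mem_univ, true_and] at hT
    exact Subtype.ext (sdiff_union_of_subset hT.1)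
  · intro C hC
    rw [mem] at hC
    exact union_sdiff_cancel_right hC.1.1

theorem card_filter_subset (j : ℕ) (X : Finset α) :
    #{A : Slice α j | A.1 ⊆ X} = (#X).choose j := by
  have h := card_filter_subset_disjoint (m := j) (disjoint_empty_left Xᶜ) (Nat.zero_le j)
  simp only [empty_subset, true_and, disjoint_compl_left_iff, card_empty, Nat.sub_zero,
    card_compl, Nat.sub_sub_self (card_le_univ X)] at h
  exact h

theorem inclusionMatrix_mul_inclusionMatrix {a b c : ℕ} (hab : a ≤ b) :
    inclusionMatrix α a b * inclusionMatrix α b c =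
      ((c - a).choose (b - a) : ℝ) • inclusionMatrix α a c := by
  ext A C
  simp only [inclusionMatrix, mul_apply, of_apply, Matrix.smul_apply, smul_eq_mul,
    Fintype.sum_boole_mul_boole]
  by_cases hAC : A.1 ⊆ C.1
  · have hcount := card_filter_subset_disjoint (m := b) (disjoint_compl_right_iff.2 hAC)
      (A.2.trans_le hab)
    simp only [← subset_compl_iff_disjoint_left, compl_compl] at hcount
    have hac : a ≤ c := A.2 ▸ C.2 ▸ card_le_card hAC
    have hc : c ≤ Fintype.card α := C.2 ▸ card_le_univ C.1
    rw [hcount, if_pos hAC, card_compl, A.2, C.2, mul_one]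
    congr 2
    omega
  · rw [if_neg hAC, mul_zero, Nat.cast_eq_zero, card_eq_zero, filter_eq_empty_iff]
    exact fun B _ h => hAC (h.1.trans h.2)

theorem disjointnessMatrix_mul_transpose_inclusionMatrix {a i k : ℕ} (hik : i ≤ k) :
    disjointnessMatrix α a k * (inclusionMatrix α i k)ᵀ =
      ((Fintype.card α - a - i).choose (k - i) : ℝ) • disjointnessMatrix α a i := by
  ext F S
  simp only [disjointnessMatrix, inclusionMatrix, mul_apply, transpose_apply, of_apply,
    Matrix.smul_apply, smul_eq_mul, Fintype.sum_boole_mul_boole]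
  by_cases hFS : Disjoint F.1 S.1
  · simp_rw [and_comm (a := Disjoint F.1 _)]
    rw [card_filter_subset_disjoint hFS.symm (S.2.trans_le hik), if_pos hFS, S.2, F.2, mul_one,
      Nat.sub_right_comm]
  · rw [if_neg hFS, mul_zero, Nat.cast_eq_zero, card_eq_zero, filter_eq_empty_iff]
    exact fun G _ h => hFS (h.1.mono_right h.2)

theorem disjointnessMatrix_eq_sum (a c : ℕ) :
    disjointnessMatrix α a c =
      ∑ j ∈ range (c + 1), (-1 : ℝ) ^ j • ((inclusionMatrix α j a)ᵀ * inclusionMatrix α j c) := by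
  ext F S
  simp only [disjointnessMatrix, inclusionMatrix, Matrix.sum_apply, Matrix.smul_apply, mul_apply,
    transpose_apply, of_apply, smul_eq_mul, Fintype.sum_boole_mul_boole, ← subset_inter_iff,
    card_filter_subset]
  have hc : #(F.1 ∩ S.1) ≤ c := (card_le_card inter_subset_right).trans_eq S.2
  rw [sum_range_neg_one_pow_mul_choose hc]
  simp only [card_eq_zero, disjoint_iff_inter_eq_empty]

variable (α) in
def harmonic (i : ℕ) : Submodule ℝ (Slice α i → ℝ) :=
  ⨅ j < i, LinearMap.ker (inclusionMatrix α j i).mulVecLin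

theorem mem_harmonic {i : ℕ} {f : Slice α i → ℝ} :
    f ∈ harmonic α i ↔ ∀ j < i, inclusionMatrix α j i *ᵥ f = 0 := by
  simp only [harmonic, Submodule.mem_iInf, LinearMap.mem_ker, mulVecLin_apply]

theorem ker_le_harmonic (i : ℕ) :
    LinearMap.ker (inclusionMatrix α (i - 1) i).mulVecLin ≤ harmonic α i := by
  intro f hf
  rw [LinearMap.mem_ker, mulVecLin_apply] at hf
  refine mem_harmonic.2 fun j hj => ?_
  have h := congrArg (· *ᵥ f) (inclusionMatrix_mul_inclusionMatrix (α := α) (c := i)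
    (Nat.le_sub_one_of_lt hj))
  simp only [← mulVec_mulVec, hf, mulVec_zero, smul_mulVec] at h
  exact (smul_eq_zero.1 h.symm).resolve_left (Nat.cast_ne_zero.2 (Nat.choose_pos (by omega)).ne')

theorem finrank_harmonic_zero : finrank ℝ (harmonic α 0) = 1 := by
  have : harmonic α 0 = ⊤ := by simp [harmonic]
  rw [this, finrank_top, finrank_fun, Nat.choose_zero_right]

theorem choose_sub_choose_le_finrank_harmonic (i : ℕ) :
    (Fintype.card α).choose i - (Fintype.card α).choose (i - 1) ≤ finrank ℝ (harmonic α i) := by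
  have hrank := LinearMap.finrank_range_add_finrank_ker (inclusionMatrix α (i - 1) i).mulVecLin
  have hrange := Submodule.finrank_le (LinearMap.range (inclusionMatrix α (i - 1) i).mulVecLin)
  have hker := Submodule.finrank_mono (ker_le_harmonic (α := α) i)
  rw [finrank_fun] at hrank hrange
  omega

theorem disjointnessMatrix_mulVec_of_mem_harmonic {a i : ℕ} {f : Slice α i → ℝ}
    (hf : f ∈ harmonic α i) :
    disjointnessMatrix α a i *ᵥ f = (-1 : ℝ) ^ i • ((inclusionMatrix α i a)ᵀ *ᵥ f) := by
  rw [mem_harmonic] at hf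
  rw [disjointnessMatrix_eq_sum, sum_mulVec, sum_range_succ, sum_eq_zero, zero_add, smul_mulVec,
    ← mulVec_mulVec, inclusionMatrix_self, one_mulVec]
  intro j hj
  rw [smul_mulVec, ← mulVec_mulVec, hf j (mem_range.1 hj), mulVec_zero, smul_zero]

theorem disjointnessMatrix_mulVec_transpose_inclusionMatrix_mulVec {a i k : ℕ} (hik : i ≤ k)
    {f : Slice α i → ℝ} (hf : f ∈ harmonic α i) :
    disjointnessMatrix α a k *ᵥ ((inclusionMatrix α i k)ᵀ *ᵥ f) =
      ((-1 : ℝ) ^ i * (Fintype.card α - a - i).choose (k - i)) •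
        ((inclusionMatrix α i a)ᵀ *ᵥ f) := by
  rw [mulVec_mulVec, disjointnessMatrix_mul_transpose_inclusionMatrix hik, smul_mulVec,
    disjointnessMatrix_mulVec_of_mem_harmonic hf, smul_smul, mul_comm]

theorem transpose_inclusionMatrix_mulVec_mem_eigenspace {i k : ℕ} (hik : i ≤ k)
    {f : Slice α i → ℝ} (hf : f ∈ harmonic α i) :
    (inclusionMatrix α i k)ᵀ *ᵥ f ∈ Module.End.eigenspace (disjointnessMatrix α k k).mulVecLin
      ((-1 : ℝ) ^ i * (Fintype.card α - k - i).choose (k - i)) := by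
  rw [Module.End.mem_eigenspace_iff, mulVecLin_apply,
    disjointnessMatrix_mulVec_transpose_inclusionMatrix_mulVec hik hf]

theorem eq_zero_of_transpose_inclusionMatrix_mulVec_eq_zero {i k : ℕ} (hik : i ≤ k)
    (hn : k + i ≤ Fintype.card α) {f : Slice α i → ℝ} (hf : f ∈ harmonic α i)
    (h0 : (inclusionMatrix α i k)ᵀ *ᵥ f = 0) : f = 0 := by
  have h := disjointnessMatrix_mulVec_transpose_inclusionMatrix_mulVec (a := i) hik hf
  rw [h0, mulVec_zero, inclusionMatrix_self, transpose_one, one_mulVec] at h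
  refine (smul_eq_zero.1 h.symm).resolve_left (mul_ne_zero (pow_ne_zero _ (by norm_num)) ?_)
  exact Nat.cast_ne_zero.2 (Nat.choose_pos (by omega)).ne'

theorem finrank_harmonic_le_finrank_eigenspace {i k : ℕ} (hik : i ≤ k)
    (hn : k + i ≤ Fintype.card α) :
    finrank ℝ (harmonic α i) ≤
      finrank ℝ (Module.End.eigenspace (disjointnessMatrix α k k).mulVecLin
        ((-1 : ℝ) ^ i * (Fintype.card α - k - i).choose (k - i))) := by
  let φ := ((inclusionMatrix α i k)ᵀ.mulVecLin.domRestrict (harmonic α i)).codRestrict _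
    fun f => transpose_inclusionMatrix_mulVec_mem_eigenspace hik f.2
  refine LinearMap.finrank_le_finrank_of_injective (f := φ) ((injective_iff_map_eq_zero φ).2 ?_)
  intro f hf
  exact Subtype.ext (eq_zero_of_transpose_inclusionMatrix_mulVec_eq_zero hik hn f.2
    (congrArg Subtype.val hf))

end Slice

theorem Module.End.sum_finrank_eigenspace_le {K V : Type*} [Field K] [AddCommGroup V] [Module K V]
    [FiniteDimensional K V] (f : End K V) (s : Finset K) :
    ∑ μ ∈ s, finrank K (f.eigenspace μ) ≤ finrank K V := by
  classical
  rw [← sum_coe_sort, ← Module.finrank_directSum]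
  exact LinearMap.finrank_le_finrank_of_injective
    (f.eigenspaces_iSupIndep.comp Subtype.val_injective).dfinsupp_lsum_injective

theorem Nat.strictAntiOn_choose_sub_sub {n k : ℕ} (hkn : 2 * k < n) :
    StrictAntiOn (fun j => (n - k - j).choose (k - j)) (Set.Iic k) := by
  refine strictAntiOn_Iic_of_succ_lt fun j hj => ?_
  obtain ⟨a, b, ha, hb⟩ : ∃ a b, n - k - j = a + 1 ∧ k - j = b + 1 :=
    ⟨n - k - j - 1, k - j - 1, by omega, by omega⟩
  simp only [Order.succ_eq_add_one]
  rw [ha, hb, show n - k - (j + 1) = a by omega, show k - (j + 1) = b by omega,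
    Nat.choose_succ_succ']
  exact Nat.lt_add_of_pos_right (Nat.choose_pos (by omega))

theorem Nat.sum_range_choose_succ_sub_choose {n k : ℕ} (hkn : 2 * k ≤ n) :
    ∑ j ∈ range k, (n.choose (j + 1) - n.choose j) = n.choose k - 1 := by
  induction k with
  | zero => simp
  | succ k ih =>
    rw [sum_range_succ, ih (by omega)]
    have hmono := Nat.choose_le_succ_of_lt_half_left (r := k) (n := n) (by omega)
    have hpos := Nat.choose_pos (n := n) (k := k) (by omega)
    omega

theorem injOn_neg_one_pow_mul_choose_sub_sub {n k : ℕ} (hkn : 2 * k < n) :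
    Set.InjOn (fun j : ℕ => (-1 : ℝ) ^ j * (n - k - j).choose (k - j)) (Set.Iic k) := by
  intro a ha b hb h
  refine (Nat.strictAntiOn_choose_sub_sub hkn).injOn ha hb ?_
  have := congrArg abs h
  simp only [abs_mul, abs_pow, abs_neg, abs_one, one_pow, one_mul, Nat.abs_cast] at this
  exact_mod_cast this

theorem disjMatrix_eigenspace_finrank (n k i : ℕ)
    (hi : 1 ≤ i) (hik : i ≤ k) (hkn : 2 * k + 1 ≤ n) :
    Module.finrank ℝ
        (Module.End.eigenspace (Matrix.mulVecLin (disjMatrix n k))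
          ((-1 : ℝ) ^ i * ((n - k - i).choose (k - i) : ℝ)))
      = n.choose i - n.choose (i - 1) := by
  let μ : ℕ → ℝ := fun j => (-1 : ℝ) ^ j * (n - k - j).choose (k - j)
  let d : ℕ → ℕ := fun j => finrank ℝ (Module.End.eigenspace (disjMatrix n k).mulVecLin (μ j))
  have hd : ∀ j ≤ k, finrank ℝ (Slice.harmonic (Fin n) j) ≤ d j := fun j hj => by
    have h := Slice.finrank_harmonic_le_finrank_eigenspace (α := Fin n) hj (by simp; omega)
    rwa [Fintype.card_fin] at h
  have hsum : ∑ j ∈ range (k + 1), d j ≤ n.choose k := by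
    have h := Module.End.sum_finrank_eigenspace_le (disjMatrix n k).mulVecLin
      ((range (k + 1)).image μ)
    rwa [sum_image fun a ha b hb => injOn_neg_one_pow_mul_choose_sub_sub (by omega)
      (by simpa [Nat.lt_succ_iff] using ha) (by simpa [Nat.lt_succ_iff] using hb),
      Slice.finrank_fun, Fintype.card_fin] at h
  have hbound : ∀ j ∈ range k, n.choose (j + 1) - n.choose j ≤ d (j + 1) := fun j hj => by
    simpa using (Slice.choose_sub_choose_le_finrank_harmonic (α := Fin n) (j + 1)).trans
      (hd (j + 1) (mem_range.1 hj))
  have h0 : 1 ≤ d 0 := by simpa [Slice.finrank_harmonic_zero] using hd 0 k.zero_le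
  rw [sum_range_succ'] at hsum
  have htel := Nat.sum_range_choose_succ_sub_choose (n := n) (k := k) (by omega)
  have heq := (sum_eq_sum_iff_of_le hbound).1 (le_antisymm (sum_le_sum hbound) (by omega))
  obtain ⟨j, rfl⟩ : ∃ j, i = j + 1 := ⟨i - 1, by omega⟩
  simpa using (heq j (mem_range.2 (by omega))).symm
end

section
/- Let m be a finite type, M : Matrix m m ℝ a symmetric matrix (hM : M.IsHermitian), with eigenvalues λ : m → ℝ and an orthonormal eigenbasis v : m → (m → ℝ) given by the spectral theorem (so M.mulVec (v i) = λ i • v i and the v i are orthonormal). For a subset s : Finset m, let M' := Σ_{i ∈ s} λ i • (vecMulVec (v i) (v i)) be the projection of M onto the eigenspaces indexed by s. Then the squared Frobenius norm of the difference satisfies trace((M − M')ᵀ * (M − M')) = Σ_{i ∉ s} (λ i)². -/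
theorem sum_sum_comm4_aux {α β : Type*} [Fintype α] (I J : Finset β) (f : α → α → β → β → ℝ) :
    (∑ a, ∑ b, ∑ i ∈ I, ∑ j ∈ J, f a b i j) = ∑ i ∈ I, ∑ j ∈ J, ∑ a, ∑ b, f a b i j :=
  calc (∑ a, ∑ b, ∑ i ∈ I, ∑ j ∈ J, f a b i j)
      = ∑ a, ∑ i ∈ I, ∑ b, ∑ j ∈ J, f a b i j :=
        Finset.sum_congr rfl fun a _ => Finset.sum_comm
    _ = ∑ a, ∑ i ∈ I, ∑ j ∈ J, ∑ b, f a b i j :=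
        Finset.sum_congr rfl fun a _ => Finset.sum_congr rfl fun i _ => Finset.sum_comm
    _ = ∑ i ∈ I, ∑ a, ∑ j ∈ J, ∑ b, f a b i j := Finset.sum_comm
    _ = ∑ i ∈ I, ∑ j ∈ J, ∑ a, ∑ b, f a b i j :=
        Finset.sum_congr rfl fun i _ => Finset.sum_comm

open Matrix in
theorem frobenius_error_of_spectral_truncation {m : Type*} [Fintype m] [DecidableEq m]
    (M : Matrix m m ℝ) (hM : M.IsHermitian)
    (lam : m → ℝ) (v : m → (m → ℝ))
    (hEig : ∀ i, M.mulVec (v i) = lam i • v i)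
    (hOrtho : ∀ i j, (∑ x, v i x * v j x) = if i = j then (1 : ℝ) else 0)
    (s : Finset m) :
    ((M - ∑ i ∈ s, lam i • Matrix.vecMulVec (v i) (v i))ᵀ *
        (M - ∑ i ∈ s, lam i • Matrix.vecMulVec (v i) (v i))).trace
      = ∑ i ∈ sᶜ, (lam i) ^ 2 := by
  classical
  -- orthonormality in the other direction
  have hPP : (Matrix.of v) * (Matrix.of v)ᵀ = 1 := by
    ext i j
    simpa [Matrix.mul_apply, Matrix.one_apply] using hOrtho i j
  have hPtP : (Matrix.of v)ᵀ * (Matrix.of v) = 1 := mul_eq_one_comm.mp hPP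
  have hO2 : ∀ a b, (∑ k, v k a * v k b) = if a = b then (1:ℝ) else 0 := by
    intro a b
    have := congrFun (congrFun hPtP a) b
    simpa [Matrix.mul_apply, Matrix.one_apply] using this
  -- spectral decomposition of M
  have hMsum : M = ∑ i, lam i • Matrix.vecMulVec (v i) (v i) := by
    ext a b
    have h1 : M a b = ∑ j, M a j * (∑ k, v k j * v k b) := by
      simp [hO2, mul_ite]
    have h2 : ∀ k, (∑ j, M a j * v k j) = lam k * v k a := by
      intro k
      have := congrFun (hEig k) a
      simpa [Matrix.mulVec, dotProduct, mul_comm] using this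
    calc M a b = ∑ j, M a j * (∑ k, v k j * v k b) := h1
      _ = ∑ k, (∑ j, M a j * v k j) * v k b := by
          simp_rw [Finset.mul_sum, Finset.sum_mul]
          rw [Finset.sum_comm]
          simp_rw [mul_assoc]
      _ = ∑ k, lam k * v k a * v k b := by simp [h2]
      _ = (∑ i, lam i • Matrix.vecMulVec (v i) (v i)) a b := by
          simp [Matrix.sum_apply, Matrix.vecMulVec_apply, mul_assoc]
  have hA : M - ∑ i ∈ s, lam i • Matrix.vecMulVec (v i) (v i)
      = ∑ i ∈ sᶜ, lam i • Matrix.vecMulVec (v i) (v i) := by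
    rw [hMsum, ← Finset.sum_add_sum_compl s]
    abel
  rw [hA]
  have hAapp : ∀ a b, (∑ i ∈ sᶜ, lam i • Matrix.vecMulVec (v i) (v i)) a b
      = ∑ i ∈ sᶜ, lam i * (v i a * v i b) := by
    intro a b
    simp [Matrix.sum_apply, Matrix.vecMulVec_apply, mul_assoc]
  rw [Matrix.trace]
  simp only [Matrix.diag_apply, Matrix.mul_apply, Matrix.transpose_apply, hAapp]
  show ∑ a, ∑ b, (∑ i ∈ sᶜ, lam i * (v i b * v i a)) * (∑ j ∈ sᶜ, lam j * (v j b * v j a)) = ∑ i ∈ sᶜ, (lam i) ^ 2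
  have expand : ∀ a b : m,
      (∑ i ∈ sᶜ, lam i * (v i b * v i a)) * (∑ j ∈ sᶜ, lam j * (v j b * v j a))
      = ∑ i ∈ sᶜ, ∑ j ∈ sᶜ, ((lam i * lam j) * (v i b * v j b)) * (v i a * v j a) := by
    intro a b
    rw [Finset.sum_mul_sum]
    exact Finset.sum_congr rfl fun i _ => Finset.sum_congr rfl fun j _ => by ring
  simp_rw [expand]
  rw [sum_sum_comm4_aux]
  refine Finset.sum_congr rfl fun i hi => ?_
  simp_rw [← Finset.sum_mul, ← Finset.mul_sum, hOrtho]
  rw [Finset.sum_eq_single i]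
  · simp [sq]
  · intro j _ hj
    simp [Ne.symm hj]
  · intro h
    exact absurd hi h
end

section
/- There exist a constant C > 0 and a natural number N such that the following holds: for every natural number n ≥ N and every real ε with 0 < ε < 1, setting k = ⌊√n⌋, letting K be the subtype {S : Finset (Fin n) // S.card = k}, M : Matrix K K ℝ the disjointness matrix, D = C(n,k) · C(n−k,k), and M̂ = (1/√D) • M the normalization of M to unit Frobenius norm, there exists a symmetric matrix M' : Matrix K K ℝ whose rank satisfies (M'.rank : ℝ) ≤ (n : ℝ)^(C · Real.log (1/ε)) and such that trace((M̂ − M')ᵀ * (M̂ − M')) ≤ 2ε. -/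
/-- The disjointness matrix normalized to unit Frobenius norm:
`M̂ = (1/√D) • M` with `D = C(n,k) · C(n−k,k)`. -/
noncomputable def disjMatrixNormalized (n k : ℕ) :
    Matrix {S : Finset (Fin n) // S.card = k} {S : Finset (Fin n) // S.card = k} ℝ :=
  ((1 : ℝ) / Real.sqrt ((n.choose k * (n - k).choose k : ℕ))) • disjMatrix n k

/-!
Inclusion–exclusion writes the disjointness indicator as `[m = 0] = ∑_{j ≤ m} (-1)^j C(m, j)`
with `m = |S ∩ T|`, and the matrix `(C(|S ∩ T|, j))_{S,T}` factors through the `j`-subsets, so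
it has rank at most `C(n, j)`. Truncating the expansion at `j ≤ t` gives a symmetric matrix of
rank `< n^(t+1)` whose entry at `|S ∩ T| = m ≥ 1` is off by `±C(m - 1, t)`, which vanishes for
`m ≤ t`. When `k² ≤ n`, the `k`-sets meeting a fixed `k`-set in `m` points are at most
`2^m / m!` times as many as those disjoint from it, so this superexponential decay beats
`C(m - 1, t)² ≤ 4^m` and the squared Frobenius error is at most `2^60 · 2^(-t)`. Taking
`t = 60 + ⌈log₂ (1/ε)⌉` proves the theorem for `ε < 1/2`; for `ε ≥ 1/2` the zero matrix works,
because `M̂` has unit Frobenius norm.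
-/

open Finset Matrix

namespace Matrix

variable {m n K : Type*} [Fintype n] [Field K]

theorem rank_add_le (A B : Matrix m n K) : (A + B).rank ≤ A.rank + B.rank := by
  rw [rank, rank, rank, mulVecLin_add]
  calc Module.finrank K (LinearMap.range (A.mulVecLin + B.mulVecLin))
      ≤ Module.finrank K (LinearMap.range A.mulVecLin ⊔ LinearMap.range B.mulVecLin :
          Submodule K (m → K)) := by
        refine Submodule.finrank_mono ?_
        rintro _ ⟨x, rfl⟩
        exact Submodule.add_mem_sup ⟨x, rfl⟩ ⟨x, rfl⟩
    _ ≤ _ := Submodule.finrank_add_le_finrank_add_finrank _ _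

theorem rank_finsetSum_le {ι : Type*} (s : Finset ι) (A : ι → Matrix m n K) :
    (∑ i ∈ s, A i).rank ≤ ∑ i ∈ s, (A i).rank :=
  Finset.sum_hom_rel (r := fun (B : Matrix m n K) k => B.rank ≤ k) (rank_zero (R := K)).le
    fun _ _ _ h => (rank_add_le _ _).trans (by gcongr)

theorem rank_smul_le (c : K) (A : Matrix m n K) : (c • A).rank ≤ A.rank := by
  classical
  rw [smul_eq_mul_diagonal]
  exact rank_mul_le_left _ _

end Matrix

section IntersectionMatrix

variable (α : Type*) [DecidableEq α]

def intersectionMatrix (k : ℕ) (f : ℕ → ℝ) :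
    Matrix {S : Finset α // S.card = k} {S : Finset α // S.card = k} ℝ :=
  of fun S T => f #(S.1 ∩ T.1)

def inclusionMatrix (k j : ℕ) :
    Matrix {S : Finset α // S.card = k} {U : Finset α // U.card = j} ℝ :=
  of fun S U => if U.1 ⊆ S.1 then 1 else 0

variable {α}

theorem intersectionMatrix_isSymm (k : ℕ) (f : ℕ → ℝ) : (intersectionMatrix α k f).IsSymm := by
  ext S T
  simp [intersectionMatrix, inter_comm]

variable [Fintype α]

theorem inclusionMatrix_mul_transpose (k j : ℕ) :
    inclusionMatrix α k j * (inclusionMatrix α k j)ᵀ =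
      intersectionMatrix α k fun m => (m.choose j : ℝ) := by
  ext S T
  simp only [inclusionMatrix, intersectionMatrix, mul_apply, transpose_apply, of_apply,
    ite_zero_mul_ite_zero, one_mul, ← subset_inter_iff]
  rw [← card_powersetCard, Finset.sum_boole, Nat.cast_inj]
  refine card_nbij (·.1) (fun U hU => ?_) Subtype.val_injective.injOn fun V hV => ?_
  · simp_all [mem_powersetCard, U.2]
  · rw [mem_coe, mem_powersetCard] at hV
    exact ⟨⟨V, hV.2⟩, by simpa using hV.1, rfl⟩

theorem card_filter_card_inter_eq {S : Finset α} {k : ℕ} (hS : #S = k) (m : ℕ) :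
    #{T : Finset α | #T = k ∧ #(S ∩ T) = m} =
      k.choose m * (Fintype.card α - k).choose (k - m) := by
  subst hS
  rw [← card_compl, ← card_powersetCard, ← card_powersetCard, ← card_product]
  have split {A B : Finset α} (hA : A ⊆ S) (hSB : Disjoint S B) :
      S ∩ (A ∪ B) = A ∧ (A ∪ B) \ S = B := by
    rw [inter_union_distrib_left, inter_eq_right.2 hA, disjoint_iff_inter_eq_empty.1 hSB,
      union_empty, union_sdiff_distrib, sdiff_eq_empty_iff_subset.2 hA, empty_union,
      sdiff_eq_self_of_disjoint hSB.symm]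
    exact ⟨rfl, rfl⟩
  refine card_bij' (fun T _ => (S ∩ T, T \ S)) (fun p _ => p.1 ∪ p.2) ?_ ?_ ?_ ?_ <;>
    simp only [mem_filter, mem_univ, true_and, mem_product, mem_powersetCard]
  · rintro T ⟨hT, rfl⟩
    refine ⟨⟨inter_subset_left, rfl⟩, fun x hx => mem_compl.2 (mem_sdiff.1 hx).2, ?_⟩
    rw [card_sdiff, inter_comm, hT]
  · rintro ⟨A, B⟩ ⟨⟨hA, rfl⟩, hB, hBcard⟩
    have hSB := subset_compl_iff_disjoint_left.1 hB
    refine ⟨?_, by rw [(split hA hSB).1]⟩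
    rw [card_union_of_disjoint (hSB.mono_left hA), hBcard,
      Nat.add_sub_cancel' (card_le_card hA)]
  · intro T _
    ext x; simp only [mem_union, mem_inter, mem_sdiff]; tauto
  · rintro ⟨A, B⟩ ⟨⟨hA, -⟩, hB, -⟩
    rw [(split hA (subset_compl_iff_disjoint_left.1 hB)).1,
      (split hA (subset_compl_iff_disjoint_left.1 hB)).2]

theorem sum_card_inter_eq {S : Finset α} {k : ℕ} (hS : #S = k) (g : ℕ → ℝ) :
    ∑ T : {T : Finset α // #T = k}, g #(S ∩ T.1) =
      ∑ m ∈ range (k + 1), k.choose m * (Fintype.card α - k).choose (k - m) * g m := by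
  have hmaps : ∀ T ∈ ({T | #T = k} : Finset (Finset α)), #(S ∩ T) ∈ range (k + 1) :=
    fun T _ => mem_range_succ_iff.2 (hS ▸ card_le_card inter_subset_left)
  rw [← sum_subtype _ (mem_filter_univ (p := fun T : Finset α => #T = k)) (fun T => g #(S ∩ T)),
    ← sum_fiberwise_of_maps_to' hmaps]
  refine sum_congr rfl fun m _ => ?_
  rw [sum_const, filter_filter, card_filter_card_inter_eq hS, nsmul_eq_mul]
  push_cast
  rfl

theorem trace_transpose_mul_intersectionMatrix (k : ℕ) (f : ℕ → ℝ) :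
    ((intersectionMatrix α k f)ᵀ * intersectionMatrix α k f).trace =
      (Fintype.card α).choose k *
        ∑ m ∈ range (k + 1), k.choose m * (Fintype.card α - k).choose (k - m) * f m ^ 2 := by
  simp only [trace, diag_apply, mul_apply, transpose_apply, intersectionMatrix, of_apply, ← sq]
  rw [sum_congr rfl fun T _ => ?_, sum_const, card_univ, Fintype.card_finset_len, nsmul_eq_mul]
  simp only [inter_comm _ T.1]
  exact sum_card_inter_eq T.2 (f · ^ 2)

theorem rank_intersectionMatrix_sum_choose_le (k : ℕ) (s : Finset ℕ) (a : ℕ → ℝ) :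
    (intersectionMatrix α k fun m => ∑ j ∈ s, a j * m.choose j).rank ≤
      ∑ j ∈ s, (Fintype.card α).choose j := by
  have hsum : (intersectionMatrix α k fun m => ∑ j ∈ s, a j * m.choose j) =
      ∑ j ∈ s, a j • (inclusionMatrix α k j * (inclusionMatrix α k j)ᵀ) := by
    ext S T
    simp [inclusionMatrix_mul_transpose, intersectionMatrix, Matrix.sum_apply]
  rw [hsum]
  refine (rank_finsetSum_le _ _).trans (sum_le_sum fun j _ => ?_)
  calc (a j • (inclusionMatrix α k j * (inclusionMatrix α k j)ᵀ)).rank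
      ≤ (inclusionMatrix α k j * (inclusionMatrix α k j)ᵀ).rank := rank_smul_le _ _
    _ ≤ Fintype.card {U : Finset α // #U = j} :=
      (rank_mul_le_left _ _).trans (rank_le_card_width _)
    _ = (Fintype.card α).choose j := Fintype.card_finset_len j

end IntersectionMatrix

namespace Nat

theorem pow_le_pow_mul_factorial (r m : ℕ) : (r + 1) ^ m ≤ (r + 1) ^ r * m ! := by
  rcases le_or_gt m r with h | h
  · exact (Nat.pow_le_pow_right r.succ_pos h).trans
      (Nat.le_mul_of_pos_right _ m.factorial_pos)
  · obtain ⟨d, rfl⟩ := Nat.exists_eq_add_of_le h.le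
    calc (r + 1) ^ (r + d) = (r + 1) ^ r * (r + 1) ^ d := pow_add _ _ _
      _ ≤ (r + 1) ^ r * (r ! * (r + 1) ^ d) :=
        Nat.mul_le_mul_left _ (Nat.le_mul_of_pos_left _ r.factorial_pos)
      _ ≤ (r + 1) ^ r * (r + d)! := Nat.mul_le_mul_left _ factorial_mul_pow_le_factorial

theorem choose_sub_mul_pow_le {a k m : ℕ} (hka : k ≤ a) (hmk : m ≤ k) :
    a.choose (k - m) * (a - k + 1) ^ m ≤ a.choose k * k ^ m := by
  induction m with
  | zero => simp
  | succ m ih =>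
    obtain ⟨b, hb, hb'⟩ : ∃ b, k - m = b + 1 ∧ k - (m + 1) = b :=
      ⟨k - (m + 1), by omega, rfl⟩
    have hstep : a.choose b * (a - k + 1) ≤ a.choose (k - m) * k :=
      calc a.choose b * (a - k + 1) ≤ a.choose b * (a - b) := Nat.mul_le_mul_left _ (by omega)
        _ = a.choose (b + 1) * (b + 1) := (choose_succ_right_eq a b).symm
        _ ≤ a.choose (k - m) * k := by rw [hb]; exact Nat.mul_le_mul_left _ (by omega)
    calc a.choose (k - (m + 1)) * (a - k + 1) ^ (m + 1)
        = a.choose b * (a - k + 1) * (a - k + 1) ^ m := by rw [hb', pow_succ]; ring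
      _ ≤ a.choose (k - m) * k * (a - k + 1) ^ m := Nat.mul_le_mul_right _ hstep
      _ = k * (a.choose (k - m) * (a - k + 1) ^ m) := by ring
      _ ≤ k * (a.choose k * k ^ m) := Nat.mul_le_mul_left _ (ih (by omega))
      _ = a.choose k * k ^ (m + 1) := by ring

theorem choose_mul_choose_sub_mul_factorial_le {n k m : ℕ} (hkn : k * k ≤ n) (h4k : 4 * k ≤ n)
    (hmk : m ≤ k) : k.choose m * (n - k).choose (k - m) * m ! ≤ 2 ^ m * (n - k).choose k := by
  set q := n - k - k + 1
  have hq : k * k ≤ 2 * q := by omega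
  refine Nat.le_of_mul_le_mul_right ?_ (pow_pos (show 0 < q by omega) m)
  calc k.choose m * (n - k).choose (k - m) * m ! * q ^ m
      = (m ! * k.choose m) * ((n - k).choose (k - m) * q ^ m) := by ring
    _ ≤ k ^ m * ((n - k).choose k * k ^ m) := by
      rw [← descFactorial_eq_factorial_mul_choose]
      exact Nat.mul_le_mul (descFactorial_le_pow k m) (choose_sub_mul_pow_le (by omega) hmk)
    _ = (n - k).choose k * (k * k) ^ m := by ring
    _ ≤ (n - k).choose k * (2 * q) ^ m := Nat.mul_le_mul_left _ (Nat.pow_le_pow_left hq m)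
    _ = 2 ^ m * (n - k).choose k * q ^ m := by rw [mul_pow]; ring

theorem choose_mul_choose_sub_mul_eight_pow_le {n k m : ℕ} (hkn : k * k ≤ n) (h4k : 4 * k ≤ n)
    (hmk : m ≤ k) : k.choose m * (n - k).choose (k - m) * 8 ^ m ≤ 2 ^ 60 * (n - k).choose k := by
  refine Nat.le_of_mul_le_mul_right ?_ m.factorial_pos
  calc k.choose m * (n - k).choose (k - m) * 8 ^ m * m !
      = (k.choose m * (n - k).choose (k - m) * m !) * 8 ^ m := by ring
    _ ≤ 2 ^ m * (n - k).choose k * 8 ^ m :=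
      Nat.mul_le_mul_right _ (choose_mul_choose_sub_mul_factorial_le hkn h4k hmk)
    _ = (n - k).choose k * (15 + 1) ^ m := by rw [show 15 + 1 = 2 * 8 from rfl, mul_pow]; ring
    _ ≤ (n - k).choose k * ((15 + 1) ^ 15 * m !) :=
      Nat.mul_le_mul_left _ (pow_le_pow_mul_factorial 15 m)
    _ = 2 ^ 60 * (n - k).choose k * m ! := by ring

end Nat

def alternatingChooseSum (t m : ℕ) : ℝ := ∑ j ∈ range (t + 1), (-1) ^ j * m.choose j

theorem alternatingChooseSum_zero (t : ℕ) : alternatingChooseSum t 0 = 1 := by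
  simp [alternatingChooseSum, sum_range_succ']

theorem alternatingChooseSum_succ (t m : ℕ) :
    alternatingChooseSum t (m + 1) = (-1) ^ t * m.choose t := by
  rw [alternatingChooseSum]
  exact_mod_cast Int.alternating_sum_range_choose_eq_choose

theorem sq_indicator_sub_alternatingChooseSum_le (t m : ℕ) :
    ((if m = 0 then 1 else 0) - alternatingChooseSum t m) ^ 2 ≤ if t < m then 4 ^ m else 0 := by
  cases m with
  | zero => simp [alternatingChooseSum_zero]
  | succ m =>
    rw [if_neg m.succ_ne_zero, alternatingChooseSum_succ, zero_sub, neg_sq, mul_pow, ← pow_mul,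
      pow_mul', neg_one_sq, one_pow, one_mul]
    split_ifs with h
    · calc ((m.choose t : ℕ) : ℝ) ^ 2 ≤ ((2 : ℝ) ^ m) ^ 2 := by
            gcongr; exact_mod_cast Nat.choose_le_two_pow m t
        _ = 4 ^ m := by rw [← pow_mul, mul_comm, pow_mul]; norm_num
        _ ≤ 4 ^ (m + 1) := pow_le_pow_right₀ (by norm_num) m.le_succ
    · rw [Nat.choose_eq_zero_of_lt (by omega)]
      simp

theorem sum_choose_mul_sq_indicator_sub_alternatingChooseSum_le {n k : ℕ} (hkn : k * k ≤ n)
    (h4k : 4 * k ≤ n) (t : ℕ) :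
    ∑ m ∈ range (k + 1), (k.choose m * (n - k).choose (k - m) : ℝ) *
        ((if m = 0 then 1 else 0) - alternatingChooseSum t m) ^ 2 ≤
      2 ^ 60 * ((n - k).choose k : ℝ) * (1 / 2) ^ t := by
  have hterm : ∀ m ∈ range (k + 1), (k.choose m * (n - k).choose (k - m) : ℝ) *
      ((if m = 0 then 1 else 0) - alternatingChooseSum t m) ^ 2 ≤
        if t < m then 2 ^ 60 * (n - k).choose k * (1 / 2 : ℝ) ^ m else 0 := by
    intro m hm
    have h8 : (k.choose m * (n - k).choose (k - m) * 8 ^ m : ℝ) ≤ 2 ^ 60 * (n - k).choose k :=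
      mod_cast Nat.choose_mul_choose_sub_mul_eight_pow_le hkn h4k (mem_range_succ_iff.1 hm)
    refine (mul_le_mul_of_nonneg_left (sq_indicator_sub_alternatingChooseSum_le t m)
      (by positivity)).trans ?_
    split_ifs
    · rw [show (4 : ℝ) ^ m = 8 ^ m * (1 / 2) ^ m by rw [← mul_pow]; norm_num, ← mul_assoc]
      gcongr
    · simp
  calc _ ≤ ∑ m ∈ range (k + 1),
        if t < m then 2 ^ 60 * (n - k).choose k * (1 / 2 : ℝ) ^ m else 0 := sum_le_sum hterm
    _ = ∑ m ∈ Ico (t + 1) (k + 1), 2 ^ 60 * (n - k).choose k * (1 / 2 : ℝ) ^ m := by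
      rw [← sum_filter]
      congr 1
      ext m
      simp only [mem_filter, mem_range, mem_Ico]
      omega
    _ ≤ 2 ^ 60 * (n - k).choose k * ((1 / 2) ^ (t + 1) / (1 - 1 / 2)) := by
      rw [← mul_sum]
      gcongr
      exact geom_sum_Ico_le_of_lt_one (by norm_num) (by norm_num)
    _ = 2 ^ 60 * (n - k).choose k * (1 / 2) ^ t := by ring

theorem disjMatrix_eq_intersectionMatrix (n k : ℕ) :
    disjMatrix n k = intersectionMatrix (Fin n) k fun m => if m = 0 then 1 else 0 := by
  ext S T
  simp [disjMatrix, intersectionMatrix, disjoint_iff_inter_eq_empty]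

noncomputable def disjNormalizer (n k : ℕ) : ℝ :=
  (1 : ℝ) / Real.sqrt ((n.choose k * (n - k).choose k : ℕ))

theorem disjMatrixNormalized_eq (n k : ℕ) :
    disjMatrixNormalized n k =
      disjNormalizer n k • intersectionMatrix (Fin n) k fun m => if m = 0 then 1 else 0 := by
  rw [← disjMatrix_eq_intersectionMatrix]
  rfl

noncomputable def disjMatrixApprox (n k t : ℕ) :
    Matrix {S : Finset (Fin n) // S.card = k} {S : Finset (Fin n) // S.card = k} ℝ :=
  disjNormalizer n k • intersectionMatrix (Fin n) k (alternatingChooseSum t)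

theorem disjMatrixApprox_isSymm (n k t : ℕ) : (disjMatrixApprox n k t).IsSymm :=
  (intersectionMatrix_isSymm k _).smul _

theorem rank_disjMatrixApprox_lt {n : ℕ} (hn : 2 ≤ n) (k t : ℕ) :
    (disjMatrixApprox n k t).rank < n ^ (t + 1) :=
  calc (disjMatrixApprox n k t).rank
      ≤ (intersectionMatrix (Fin n) k (alternatingChooseSum t)).rank := rank_smul_le _ _
    _ ≤ ∑ j ∈ range (t + 1), (Fintype.card (Fin n)).choose j :=
      rank_intersectionMatrix_sum_choose_le k (range (t + 1)) fun j => (-1) ^ j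
    _ = ∑ j ∈ range (t + 1), n.choose j := by rw [Fintype.card_fin]
    _ ≤ ∑ j ∈ range (t + 1), n ^ j := sum_le_sum fun j _ => Nat.choose_le_pow n j
    _ < n ^ (t + 1) := Nat.geomSum_lt hn fun j hj => mem_range.1 hj

theorem trace_transpose_mul_disjNormalizer_smul {n k : ℕ} (h2k : 2 * k ≤ n) (f : ℕ → ℝ) :
    ((disjNormalizer n k • intersectionMatrix (Fin n) k f)ᵀ *
      (disjNormalizer n k • intersectionMatrix (Fin n) k f)).trace =
      (∑ m ∈ range (k + 1), (k.choose m * (n - k).choose (k - m) : ℝ) * f m ^ 2) /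
        (n - k).choose k := by
  have hC₁ : (0 : ℝ) < n.choose k := by exact_mod_cast Nat.choose_pos (by omega)
  have hC₂ : (0 : ℝ) < (n - k).choose k := by exact_mod_cast Nat.choose_pos (by omega)
  rw [transpose_smul, smul_mul_smul_comm, trace_smul, trace_transpose_mul_intersectionMatrix,
    Fintype.card_fin, smul_eq_mul, ← sq, disjNormalizer, div_pow, Real.sq_sqrt (by positivity)]
  push_cast
  field_simp

theorem trace_transpose_mul_disjMatrixNormalized {n k : ℕ} (h2k : 2 * k ≤ n) :
    ((disjMatrixNormalized n k)ᵀ * disjMatrixNormalized n k).trace = 1 := by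
  have hC : (0 : ℝ) < (n - k).choose k := by exact_mod_cast Nat.choose_pos (by omega)
  rw [disjMatrixNormalized_eq, trace_transpose_mul_disjNormalizer_smul h2k]
  simp [hC.ne']

theorem trace_sub_disjMatrixApprox_le {n k : ℕ} (hkn : k * k ≤ n) (h4k : 4 * k ≤ n) (t : ℕ) :
    ((disjMatrixNormalized n k - disjMatrixApprox n k t)ᵀ *
      (disjMatrixNormalized n k - disjMatrixApprox n k t)).trace ≤ 2 ^ 60 * (1 / 2) ^ t := by
  have hC : (0 : ℝ) < (n - k).choose k := by exact_mod_cast Nat.choose_pos (by omega)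
  have hsub : disjMatrixNormalized n k - disjMatrixApprox n k t =
      disjNormalizer n k • intersectionMatrix (Fin n) k
        fun m => (if m = 0 then 1 else 0) - alternatingChooseSum t m := by
    rw [disjMatrixNormalized_eq, disjMatrixApprox, ← smul_sub]
    rfl
  rw [hsub, trace_transpose_mul_disjNormalizer_smul (by omega), div_le_iff₀ hC]
  linarith [sum_choose_mul_sq_indicator_sub_alternatingChooseSum_le hkn h4k t]

theorem half_pow_ceil_logb_le {ε : ℝ} (hε : 0 < ε) :
    (1 / 2 : ℝ) ^ ⌈Real.logb 2 (1 / ε)⌉₊ ≤ ε :=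
  calc (1 / 2 : ℝ) ^ ⌈Real.logb 2 (1 / ε)⌉₊
        = ((2 : ℝ) ^ (⌈Real.logb 2 (1 / ε)⌉₊ : ℝ))⁻¹ := by
          rw [Real.rpow_natCast, one_div, inv_pow]
    _ ≤ ((2 : ℝ) ^ Real.logb 2 (1 / ε))⁻¹ :=
        inv_anti₀ (by positivity) (Real.rpow_le_rpow_of_exponent_le one_le_two (Nat.le_ceil _))
    _ = ε := by rw [Real.rpow_logb (by norm_num) (by norm_num) (by positivity), one_div, inv_inv]

theorem ceil_logb_add_le {ε : ℝ} (hε : 0 < ε) (hε2 : ε < 1 / 2) :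
    (⌈Real.logb 2 (1 / ε)⌉₊ : ℝ) + 61 ≤ 100 * Real.log (1 / ε) := by
  have hlog2 := Real.log_two_gt_d9
  have hL : Real.log 2 ≤ Real.log (1 / ε) :=
    Real.log_le_log (by norm_num) (by rw [le_div_iff₀ hε]; linarith)
  have hceil : (⌈Real.logb 2 (1 / ε)⌉₊ : ℝ) < Real.log (1 / ε) / Real.log 2 + 1 :=
    Nat.ceil_lt_add_one (div_nonneg (by linarith) (by linarith))
  have hdiv : Real.log (1 / ε) / Real.log 2 ≤ 100 * Real.log (1 / ε) - 62 := by
    rw [div_le_iff₀ (by linarith)]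
    nlinarith
  linarith

open Matrix in
theorem low_rank_frobenius_approximation_of_disjMatrix :
    ∃ (C : ℝ) (N : ℕ), 0 < C ∧
      ∀ (n : ℕ), N ≤ n → ∀ (ε : ℝ), 0 < ε → ε < 1 →
        ∃ M' : Matrix {S : Finset (Fin n) // S.card = Nat.sqrt n}
            {S : Finset (Fin n) // S.card = Nat.sqrt n} ℝ,
          M'.IsSymm ∧
          (M'.rank : ℝ) ≤ (n : ℝ) ^ (C * Real.log (1 / ε)) ∧
          (((disjMatrixNormalized n (Nat.sqrt n) - M')ᵀ *
              (disjMatrixNormalized n (Nat.sqrt n) - M')).trace ≤ 2 * ε) := by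
  refine ⟨100, 16, by norm_num, fun n hn ε hε _ => ?_⟩
  have hk : 4 ≤ Nat.sqrt n := Nat.le_sqrt.2 hn
  have hkn : Nat.sqrt n * Nat.sqrt n ≤ n := Nat.sqrt_le n
  have h4k : 4 * Nat.sqrt n ≤ n := (Nat.mul_le_mul_right _ hk).trans hkn
  rcases le_or_gt (1 / 2) ε with hε2 | hε2
  · refine ⟨0, isSymm_zero, by simpa using Real.rpow_nonneg (Nat.cast_nonneg n) _, ?_⟩
    rw [sub_zero, trace_transpose_mul_disjMatrixNormalized (by omega)]
    linarith
  set s := ⌈Real.logb 2 (1 / ε)⌉₊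
  refine ⟨disjMatrixApprox n (Nat.sqrt n) (60 + s), disjMatrixApprox_isSymm _ _ _, ?_, ?_⟩
  · calc ((disjMatrixApprox n (Nat.sqrt n) (60 + s)).rank : ℝ)
        ≤ (n : ℝ) ^ ((60 + s + 1 : ℕ) : ℝ) := by
          rw [Real.rpow_natCast]
          exact_mod_cast (rank_disjMatrixApprox_lt (by omega) _ _).le
      _ ≤ (n : ℝ) ^ (100 * Real.log (1 / ε)) :=
          Real.rpow_le_rpow_of_exponent_le (by exact_mod_cast (by omega : 1 ≤ n))
            (by push_cast; linarith [ceil_logb_add_le hε hε2])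
  · calc _ ≤ 2 ^ 60 * (1 / 2 : ℝ) ^ (60 + s) := trace_sub_disjMatrixApprox_le hkn h4k _
      _ = (1 / 2) ^ s := by rw [pow_add, ← mul_assoc, ← mul_pow]; norm_num
      _ ≤ ε := half_pow_ceil_logb_le hε
      _ ≤ 2 * ε := by linarith
end

section
/- There exist a constant C > 0 and a natural number N such that the following holds: for every natural number n ≥ N and every real ε with 0 < ε < 1, setting k = ⌊√n⌋, letting K be the subtype {S : Finset (Fin n) // S.card = k}, M : Matrix K K ℝ the disjointness matrix, D = C(n,k) · C(n−k,k), and M̂ = (1/√D) • M the normalization of M to unit Frobenius norm, there exists a symmetric matrix M' : Matrix K K ℝ with trace(M'ᵀ * M') ≤ 1, whose rank satisfies (M'.rank : ℝ) ≤ (n : ℝ)^(C · Real.log (1/ε)), and such that trace(M̂ᵀ * M') > 1 − ε. -/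
open Matrix Finset
set_option linter.unusedSectionVars false
set_option maxHeartbeats 1000000

section RankLemmas
variable {m R : Type*} [Fintype m] [DecidableEq m]





lemma rank_add_le' (A B : Matrix m m ℝ) : (A + B).rank ≤ A.rank + B.rank := by
  classical
  have hr : LinearMap.range (A + B).mulVecLin ≤
      LinearMap.range A.mulVecLin ⊔ LinearMap.range B.mulVecLin := by
    rintro x ⟨v, rfl⟩
    rw [Matrix.mulVecLin_add]
    exact Submodule.mem_sup.2 ⟨A.mulVecLin v, ⟨v, rfl⟩, B.mulVecLin v, ⟨v, rfl⟩, rfl⟩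
  calc (A + B).rank ≤ Module.finrank ℝ ↑(LinearMap.range A.mulVecLin ⊔ LinearMap.range B.mulVecLin) :=
        Submodule.finrank_mono hr
    _ ≤ A.rank + B.rank := Submodule.finrank_add_le_finrank_add_finrank _ _

lemma rank_smul_le' (c : ℝ) (A : Matrix m m ℝ) : (c • A).rank ≤ A.rank := by
  have hr : LinearMap.range (c • A).mulVecLin ≤ LinearMap.range A.mulVecLin := by
    rintro x ⟨v, rfl⟩
    exact ⟨c • v, by simp [Matrix.mulVecLin_apply, Matrix.mulVec_smul, Matrix.smul_mulVec]⟩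
  exact Submodule.finrank_mono hr

lemma rank_vecMulVec_le (v w : m → ℝ) : (vecMulVec v w).rank ≤ 1 := by
  rw [Matrix.vecMulVec_eq (Fin 1)]
  exact (Matrix.rank_mul_le_left _ _).trans ((Matrix.rank_le_card_width _).trans (by simp))

lemma rank_sum_le' {ι : Type*} (s : Finset ι) (f : ι → Matrix m m ℝ) :
    (∑ i ∈ s, f i).rank ≤ ∑ i ∈ s, (f i).rank := by
  classical
  induction s using Finset.cons_induction with
  | empty => simp
  | cons a s ha ih =>
    rw [Finset.sum_cons, Finset.sum_cons]
    exact (rank_add_le' _ _).trans (Nat.add_le_add_left ih _)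

end RankLemmas



lemma fiber_card' {n k m : ℕ} (S : Finset (Fin n)) (hS : S.card = k) (hm : m ≤ k) :
    ((Finset.powersetCard k (univ : Finset (Fin n))).filter
        (fun T => (S ∩ T).card = m)).card = k.choose m * (n - k).choose (k - m) := by
  classical
  have : ((Finset.powersetCard k (univ : Finset (Fin n))).filter
        (fun T => (S ∩ T).card = m)).card
      = ((S.powersetCard m) ×ˢ (Sᶜ.powersetCard (k - m))).card := by
    apply Finset.card_bij' (fun T _ => (S ∩ T, T \ S)) (fun p _ => p.1 ∪ p.2)
    · intro T hT
      simp only [Finset.mem_filter, Finset.mem_powersetCard_univ] at hT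
      obtain ⟨hTc, hTm⟩ := hT
      simp only [Finset.mem_product, Finset.mem_powersetCard]
      refine ⟨⟨Finset.inter_subset_left, hTm⟩, ⟨?_, ?_⟩⟩
      · intro x hx
        simp only [Finset.mem_compl]
        exact fun hxS => (Finset.mem_sdiff.1 hx).2 hxS
      · have h1 := Finset.card_inter_add_card_sdiff T S
        rw [Finset.inter_comm] at hTm
        omega
    · intro p hp
      simp only [Finset.mem_product, Finset.mem_powersetCard] at hp
      obtain ⟨⟨hA, hAm⟩, hB, hBm⟩ := hp
      have hdisj : Disjoint p.1 p.2 := by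
        refine Finset.disjoint_left.2 fun x hx hx2 => ?_
        exact (Finset.mem_compl.1 (hB hx2)) (hA hx)
      have hSint : S ∩ (p.1 ∪ p.2) = p.1 := by
        rw [Finset.inter_union_distrib_left]
        rw [Finset.inter_eq_right.2 hA]
        have : S ∩ p.2 = ∅ := by
          apply Finset.eq_empty_of_forall_notMem
          intro x hx
          exact (Finset.mem_compl.1 (hB (Finset.mem_inter.1 hx).2)) (Finset.mem_inter.1 hx).1
        rw [this, Finset.union_empty]
      simp only [Finset.mem_filter, Finset.mem_powersetCard_univ]
      constructor
      · rw [Finset.card_union_of_disjoint hdisj, hAm, hBm]; omega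
      · rw [hSint, hAm]
    · intro T hT
      simp only [Finset.mem_filter, Finset.mem_powersetCard_univ] at hT
      simp only []
      ext x
      simp only [Finset.mem_union, Finset.mem_inter, Finset.mem_sdiff]
      tauto
    · intro p hp
      simp only [Finset.mem_product, Finset.mem_powersetCard] at hp
      obtain ⟨⟨hA, hAm⟩, hB, hBm⟩ := hp
      have hSint : S ∩ (p.1 ∪ p.2) = p.1 := by
        rw [Finset.inter_union_distrib_left, Finset.inter_eq_right.2 hA]
        have : S ∩ p.2 = ∅ := by
          apply Finset.eq_empty_of_forall_notMem
          intro x hx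
          exact (Finset.mem_compl.1 (hB (Finset.mem_inter.1 hx).2)) (Finset.mem_inter.1 hx).1
        rw [this, Finset.union_empty]
      have hBd : (p.1 ∪ p.2) \ S = p.2 := by
        ext x
        simp only [Finset.mem_sdiff, Finset.mem_union]
        constructor
        · rintro ⟨h1 | h1, h2⟩
          · exact absurd (hA h1) h2
          · exact h1
        · intro hx
          exact ⟨Or.inr hx, fun hxS => (Finset.mem_compl.1 (hB hx)) hxS⟩
      rw [hSint, hBd]
    
  rw [this, Finset.card_product, Finset.card_powersetCard, Finset.card_powersetCard,
    hS, Finset.card_compl, Fintype.card_fin, hS]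

lemma sum_by_inter {n k : ℕ} (S : Finset (Fin n)) (hS : S.card = k) (g : ℕ → ℝ) :
    ∑ T ∈ Finset.powersetCard k (univ : Finset (Fin n)), g ((S ∩ T).card)
      = ∑ m ∈ Finset.range (k + 1), (k.choose m * (n - k).choose (k - m) : ℕ) * g m := by
  classical
  have hmap : ∀ T ∈ Finset.powersetCard k (univ : Finset (Fin n)),
      (S ∩ T).card ∈ Finset.range (k + 1) := by
    intro T hT
    rw [Finset.mem_range, Nat.lt_succ_iff, ← hS]
    exact Finset.card_le_card Finset.inter_subset_left
  rw [← Finset.sum_fiberwise_of_maps_to hmap (fun T => g ((S ∩ T).card))]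
  refine Finset.sum_congr rfl fun m hm => ?_
  have hc : ∀ T ∈ (Finset.powersetCard k (univ : Finset (Fin n))).filter
      (fun T => (S ∩ T).card = m), g ((S ∩ T).card) = g m := by
    intro T hT
    rw [(Finset.mem_filter.1 hT).2]
  rw [Finset.sum_congr rfl hc, Finset.sum_const,
    fiber_card' S hS (Nat.lt_succ_iff.1 (Finset.mem_range.1 hm)), nsmul_eq_mul]

noncomputable def uvec (n k : ℕ) (A : Finset (Fin n)) : {S : Finset (Fin n) // S.card = k} → ℝ :=
  fun S => if A ⊆ S.1 then 1 else 0

noncomputable def Atr (n k τ : ℕ) :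
    Matrix {S : Finset (Fin n) // S.card = k} {S : Finset (Fin n) // S.card = k} ℝ :=
  ∑ j ∈ Finset.range (τ + 1), (-1 : ℝ) ^ j •
    ∑ A ∈ Finset.powersetCard j (univ : Finset (Fin n)),
      Matrix.vecMulVec (uvec n k A) (uvec n k A)

noncomputable def cval (τ m : ℕ) : ℝ :=
  ∑ j ∈ Finset.range (τ + 1), (-1 : ℝ) ^ j * (m.choose j : ℝ)

lemma Atr_apply (n k τ : ℕ) (S T : {S : Finset (Fin n) // S.card = k}) :
    Atr n k τ S T = cval τ ((S.1 ∩ T.1).card) := by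
  classical
  unfold Atr cval
  rw [Matrix.sum_apply]
  refine Finset.sum_congr rfl fun j hj => ?_
  rw [Matrix.smul_apply, Matrix.sum_apply]
  have h1 : ∀ A ∈ Finset.powersetCard j (univ : Finset (Fin n)),
      Matrix.vecMulVec (uvec n k A) (uvec n k A) S T
        = if A ⊆ S.1 ∩ T.1 then (1 : ℝ) else 0 := by
    intro A _
    rw [Matrix.vecMulVec_apply]
    unfold uvec
    by_cases h2 : A ⊆ S.1 <;> by_cases h3 : A ⊆ T.1 <;>
      simp [h2, h3, Finset.subset_inter_iff]
  rw [Finset.sum_congr rfl h1]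
  rw [Finset.sum_boole]
  have h2 : (Finset.powersetCard j (univ : Finset (Fin n))).filter (fun A => A ⊆ S.1 ∩ T.1)
      = (S.1 ∩ T.1).powersetCard j := by
    ext A
    simp only [Finset.mem_filter, Finset.mem_powersetCard, Finset.subset_univ, true_and]
    tauto
  rw [h2]
  simp [Finset.card_powersetCard, smul_eq_mul]

lemma cval_zero (τ : ℕ) : cval τ 0 = 1 := by
  unfold cval
  rw [Finset.sum_eq_single 0]
  · simp
  · intro j hj hj0
    rw [Nat.choose_eq_zero_of_lt (Nat.pos_of_ne_zero hj0)]
    simp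
  · simp

lemma cval_vanish (τ m : ℕ) (h1 : 1 ≤ m) (h2 : m ≤ τ) : cval τ m = 0 := by
  unfold cval
  rw [← Finset.sum_subset (Finset.range_subset_range.2 (Nat.succ_le_succ h2))
    (fun j _ hj => by rw [Nat.choose_eq_zero_of_lt (by simpa using hj), Nat.cast_zero, mul_zero])]
  have := Int.alternating_sum_range_choose_of_ne (Nat.one_le_iff_ne_zero.1 h1) (n := m)
  have h3 : ((∑ j ∈ Finset.range (m + 1), ((-1) ^ j * m.choose j : ℤ) : ℤ) : ℝ) = 0 := by
    rw [this]; simp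
  push_cast at h3
  convert h3 using 2

lemma cval_abs_le (τ m : ℕ) : |cval τ m| ≤ 2 ^ m := by
  unfold cval
  calc |∑ j ∈ Finset.range (τ + 1), (-1 : ℝ) ^ j * (m.choose j : ℝ)|
      ≤ ∑ j ∈ Finset.range (τ + 1), |(-1 : ℝ) ^ j * (m.choose j : ℝ)| :=
        Finset.abs_sum_le_sum_abs _ _
    _ = ∑ j ∈ Finset.range (τ + 1), ((m.choose j : ℕ) : ℝ) := by
        refine Finset.sum_congr rfl fun j _ => ?_
        rw [abs_mul, abs_pow, abs_neg, abs_one, one_pow, one_mul, abs_of_nonneg (by positivity)]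
    _ = ((∑ j ∈ Finset.range (τ + 1), m.choose j : ℕ) : ℝ) := by push_cast; ring
    _ ≤ 2 ^ m := by
        have : (∑ j ∈ Finset.range (τ + 1), m.choose j : ℕ) ≤ 2 ^ m := by
          rcases Nat.le_total τ m with h | h
          · calc ∑ j ∈ Finset.range (τ + 1), m.choose j
                ≤ ∑ j ∈ Finset.range (m + 1), m.choose j :=
                  Finset.sum_le_sum_of_subset (Finset.range_subset_range.2 (Nat.succ_le_succ h))
              _ = 2 ^ m := Nat.sum_range_choose m
          · rw [← Finset.sum_subset (Finset.range_subset_range.2 (Nat.succ_le_succ h))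
              (fun j _ hj => Nat.choose_eq_zero_of_lt (by simpa using hj))]
            rw [Nat.sum_range_choose m]
        exact_mod_cast this


lemma choose_ratio (N k : ℕ) (hk : k ≤ N) :
    ∀ m, m ≤ k → N.choose (k - m) * (N - k + 1) ^ m ≤ N.choose k * k ^ m := by
  intro m
  induction m with
  | zero => simp
  | succ m ih =>
    intro hm
    have hm' : m ≤ k := le_of_lt (Nat.lt_of_succ_le hm)
    have key : N.choose (k - (m + 1)) * (N - k + 1) ≤ N.choose (k - m) * k := by
      have hid := Nat.choose_succ_right_eq N (k - m - 1)
      -- N.choose (k-m-1+1) * (k-m-1+1) = N.choose (k-m-1) * (N - (k-m-1))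
      have h1 : k - m - 1 + 1 = k - m := by omega
      rw [h1] at hid
      have h2 : k - (m + 1) = k - m - 1 := by omega
      rw [h2]
      calc N.choose (k - m - 1) * (N - k + 1)
          ≤ N.choose (k - m - 1) * (N - (k - m - 1)) :=
            Nat.mul_le_mul_left _ (by omega)
        _ = N.choose (k - m) * (k - m) := hid.symm
        _ ≤ N.choose (k - m) * k := Nat.mul_le_mul_left _ (by omega)
    calc N.choose (k - (m + 1)) * (N - k + 1) ^ (m + 1)
        = N.choose (k - (m + 1)) * (N - k + 1) * (N - k + 1) ^ m := by ring
      _ ≤ N.choose (k - m) * k * (N - k + 1) ^ m := Nat.mul_le_mul_right _ key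
      _ = N.choose (k - m) * (N - k + 1) ^ m * k := by ring
      _ ≤ N.choose k * k ^ m * k := Nat.mul_le_mul_right _ (ih hm')
      _ = N.choose k * k ^ (m + 1) := by ring

lemma choose_shift (n k : ℕ) (hk : 2 * k ≤ n) :
    ∀ j, j ≤ k → n.choose k * (n - 2 * k + 1) ^ j ≤ (n - j).choose k * (n - k + 1) ^ j := by
  intro j
  induction j with
  | zero => simp
  | succ j ih =>
    intro hj
    have hj' : j ≤ k := le_of_lt (Nat.lt_of_succ_le hj)
    have key : (n - j).choose k * (n - 2 * k + 1) ≤ (n - (j + 1)).choose k * (n - k + 1) := by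
      have hM1 : 1 ≤ n - j := by omega
      have hMk : k + 1 ≤ n - j := by omega
      have hid : (n - j).choose k * ((n - j) - k) = (n - j) * ((n - j - 1)).choose k := by
        have h5 : n - j - 1 + 1 = n - j := by omega
        calc (n - j).choose k * ((n - j) - k)
            = (n - j).choose (k + 1) * (k + 1) := (Nat.choose_succ_right_eq (n - j) k).symm
          _ = (n - j - 1 + 1).choose (k + 1) * (k + 1) := by rw [h5]
          _ = (n - j - 1 + 1) * (n - j - 1).choose k := (Nat.add_one_mul_choose_eq (n - j - 1) k).symm
          _ = (n - j) * (n - j - 1).choose k := by rw [h5]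
      have hpos : 0 < (n - j) - k := by omega
      have hmul : (n - j) * (n - 2 * k + 1) ≤ (n - k + 1) * ((n - j) - k) := by
        zify [hk, (by omega : j ≤ n), (by omega : k ≤ n), (by omega : k ≤ n - j)]
        nlinarith [sq_nonneg ((k : ℤ) - j - 1), (by omega : (0:ℤ) ≤ k), (by omega : (j:ℤ) + 1 ≤ k)]
      have hstep : (n - j).choose k * (n - 2 * k + 1) * ((n - j) - k)
          ≤ (n - (j + 1)).choose k * (n - k + 1) * ((n - j) - k) := by
        have h6 : n - (j + 1) = n - j - 1 := by omega
        calc (n - j).choose k * (n - 2 * k + 1) * ((n - j) - k)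
            = ((n - j).choose k * ((n - j) - k)) * (n - 2 * k + 1) := by ring
          _ = (n - j - 1).choose k * ((n - j) * (n - 2 * k + 1)) := by rw [hid]; ring
          _ ≤ (n - j - 1).choose k * ((n - k + 1) * ((n - j) - k)) :=
              Nat.mul_le_mul_left _ hmul
          _ = (n - (j + 1)).choose k * (n - k + 1) * ((n - j) - k) := by rw [h6]; ring
      exact Nat.le_of_mul_le_mul_right hstep hpos
    calc n.choose k * (n - 2 * k + 1) ^ (j + 1)
        = n.choose k * (n - 2 * k + 1) ^ j * (n - 2 * k + 1) := by ring
      _ ≤ (n - j).choose k * (n - k + 1) ^ j * (n - 2 * k + 1) := Nat.mul_le_mul_right _ (ih hj')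
      _ = (n - j).choose k * (n - 2 * k + 1) * (n - k + 1) ^ j := by ring
      _ ≤ (n - (j + 1)).choose k * (n - k + 1) * (n - k + 1) ^ j := Nat.mul_le_mul_right _ key
      _ = (n - (j + 1)).choose k * (n - k + 1) ^ (j + 1) := by ring

lemma sixteen_pow_le (m : ℕ) (hm : 16 ≤ m) : 16 ^ m ≤ 2 ^ 20 * m.factorial := by
  induction m with
  | zero => omega
  | succ m ih =>
    rcases Nat.lt_or_ge m 16 with h | h
    · have hm15 : m = 15 := by omega
      subst hm15
      norm_num [Nat.factorial]
    · calc 16 ^ (m + 1) = 16 * 16 ^ m := by ring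
        _ ≤ 16 * (2 ^ 20 * m.factorial) := Nat.mul_le_mul_left _ (ih h)
        _ ≤ (m + 1) * (2 ^ 20 * m.factorial) := Nat.mul_le_mul_right _ (by omega)
        _ = 2 ^ 20 * (m + 1).factorial := by rw [Nat.factorial_succ]; ring


lemma frob_trace {K : Type*} [Fintype K] (X Y : Matrix K K ℝ) :
    (Xᵀ * Y).trace = ∑ a : K, ∑ b : K, X a b * Y a b := by
  simp only [Matrix.trace, Matrix.diag, Matrix.mul_apply, Matrix.transpose_apply]
  exact Finset.sum_comm

lemma main_aux (n k τ : ℕ) (ε : ℝ) (hε : 0 < ε) (hε1 : ε < 1)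
    (hk1 : 1 ≤ k) (h2k : 2 * k ≤ n) (hτk : τ ≤ k)
    (hover : (1 - ε) ^ 2 * (((n - k).choose k : ℝ) +
        ∑ m ∈ Finset.Ico (τ + 1) (k + 1),
          ((k.choose m * (n - k).choose (k - m) : ℕ) : ℝ) * (cval τ m) ^ 2)
      < ((n - k).choose k : ℝ)) :
    ∃ M' : Matrix {S : Finset (Fin n) // S.card = k} {S : Finset (Fin n) // S.card = k} ℝ,
      M'.IsSymm ∧ (M'ᵀ * M').trace ≤ 1 ∧
      (M'.rank : ℝ) ≤ (((τ + 1) * n ^ τ : ℕ) : ℝ) ∧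
      ((disjMatrixNormalized n k)ᵀ * M').trace > 1 - ε := by
  classical
  set A := Atr n k τ with hA
  set B : ℝ := ((n - k).choose k : ℝ) with hBdef
  set R : ℝ := ∑ m ∈ Finset.Ico (τ + 1) (k + 1),
      ((k.choose m * (n - k).choose (k - m) : ℕ) : ℝ) * (cval τ m) ^ 2 with hRdef
  have hB0 : 0 < B := by
    rw [hBdef]
    have : 0 < (n - k).choose k := Nat.choose_pos (by omega)
    exact_mod_cast this
  have hR0 : 0 ≤ R := Finset.sum_nonneg fun m _ => by positivity
  -- per-row sums
  have hsum1 : ∀ S : {S : Finset (Fin n) // S.card = k},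
      ∑ T : {S : Finset (Fin n) // S.card = k}, A S T * A S T = B + R := by
    intro S
    calc ∑ T : {S : Finset (Fin n) // S.card = k}, A S T * A S T
        = ∑ T : {S : Finset (Fin n) // S.card = k}, (cval τ ((S.1 ∩ T.1).card)) ^ 2 := by
          refine Finset.sum_congr rfl fun T _ => ?_
          rw [hA, Atr_apply]; ring
      _ = ∑ X ∈ Finset.powersetCard k (univ : Finset (Fin n)), (cval τ ((S.1 ∩ X).card)) ^ 2 :=
          (Finset.sum_subtype (Finset.powersetCard k (univ : Finset (Fin n)))
            (fun X => Finset.mem_powersetCard_univ)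
            (fun X => (cval τ ((S.1 ∩ X).card)) ^ 2)).symm
      _ = ∑ m ∈ Finset.range (k + 1),
            ((k.choose m * (n - k).choose (k - m) : ℕ) : ℝ) * (cval τ m) ^ 2 :=
          sum_by_inter S.1 S.2 (fun m => (cval τ m) ^ 2)
      _ = B + R := by
          rw [Finset.range_eq_Ico,
            ← Finset.sum_Ico_consecutive _ (by omega : 0 ≤ τ + 1) (by omega : τ + 1 ≤ k + 1),
            ← Finset.sum_Ico_consecutive _ (by omega : (0:ℕ) ≤ 1) (by omega : 1 ≤ τ + 1)]
          have h01 : Finset.Ico (0:ℕ) 1 = {0} := by ext x; simp [Nat.lt_one_iff]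
          have p1 : ∑ m ∈ Finset.Ico (0:ℕ) 1,
              ((k.choose m * (n - k).choose (k - m) : ℕ) : ℝ) * (cval τ m) ^ 2 = B := by
            rw [h01, Finset.sum_singleton, cval_zero]
            simp [hBdef]
          have p2 : ∑ m ∈ Finset.Ico 1 (τ + 1),
              ((k.choose m * (n - k).choose (k - m) : ℕ) : ℝ) * (cval τ m) ^ 2 = 0 := by
            refine Finset.sum_eq_zero fun m hm => ?_
            rw [Finset.mem_Ico] at hm
            rw [cval_vanish τ m hm.1 (by omega)]
            ring
          rw [p1, p2, hRdef]
          ring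
  have hsum2 : ∀ S : {S : Finset (Fin n) // S.card = k},
      ∑ T : {S : Finset (Fin n) // S.card = k}, disjMatrix n k S T * A S T = B := by
    intro S
    calc ∑ T : {S : Finset (Fin n) // S.card = k}, disjMatrix n k S T * A S T
        = ∑ T : {S : Finset (Fin n) // S.card = k},
            (if ((S.1 ∩ T.1).card) = 0 then (1:ℝ) else 0) * cval τ ((S.1 ∩ T.1).card) := by
          refine Finset.sum_congr rfl fun T _ => ?_
          rw [hA, Atr_apply]
          congr 1
          show (if Disjoint S.1 T.1 then (1:ℝ) else 0) = _
          congr 1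
          simp [Finset.disjoint_iff_inter_eq_empty, Finset.card_eq_zero]
      _ = ∑ X ∈ Finset.powersetCard k (univ : Finset (Fin n)),
            (if ((S.1 ∩ X).card) = 0 then (1:ℝ) else 0) * cval τ ((S.1 ∩ X).card) :=
          (Finset.sum_subtype (Finset.powersetCard k (univ : Finset (Fin n)))
            (fun X => Finset.mem_powersetCard_univ)
            (fun X => (if ((S.1 ∩ X).card) = 0 then (1:ℝ) else 0) * cval τ ((S.1 ∩ X).card))).symm
      _ = ∑ m ∈ Finset.range (k + 1),
            ((k.choose m * (n - k).choose (k - m) : ℕ) : ℝ) *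
              ((if m = 0 then (1:ℝ) else 0) * cval τ m) :=
          sum_by_inter S.1 S.2 (fun m => (if m = 0 then (1:ℝ) else 0) * cval τ m)
      _ = B := by
          rw [Finset.sum_eq_single 0]
          · rw [if_pos rfl, cval_zero]
            simp [hBdef]
          · intro m _ hm0
            rw [if_neg hm0]
            ring
          · intro h
            exact absurd (Finset.mem_range.2 (by omega)) h
  have hcard : ((Fintype.card {S : Finset (Fin n) // S.card = k}) : ℝ) = (n.choose k : ℝ) := by
    rw [Fintype.card_finset_len, Fintype.card_fin]
  have hNk0 : 0 < (n.choose k : ℝ) := by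
    have : 0 < n.choose k := Nat.choose_pos (by omega)
    exact_mod_cast this
  set F : ℝ := (n.choose k : ℝ) * (B + R) with hFdef
  have hF0 : 0 < F := mul_pos hNk0 (by linarith)
  have hFtrace : (Aᵀ * A).trace = F := by
    rw [frob_trace]
    rw [Finset.sum_congr rfl fun S _ => hsum1 S, Finset.sum_const, Finset.card_univ,
      nsmul_eq_mul, hcard]
  have hDtrace : ((disjMatrix n k)ᵀ * A).trace = (n.choose k : ℝ) * B := by
    rw [frob_trace]
    rw [Finset.sum_congr rfl fun S _ => hsum2 S, Finset.sum_const, Finset.card_univ,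
      nsmul_eq_mul, hcard]
  have hAsymm : A.IsSymm := by
    ext S T
    rw [Matrix.transpose_apply, hA, Atr_apply, Atr_apply, Finset.inter_comm]
  refine ⟨(1 / Real.sqrt F) • A, ?_, ?_, ?_, ?_⟩
  · -- symmetry
    unfold Matrix.IsSymm
    rw [Matrix.transpose_smul, hAsymm]
  · -- trace ≤ 1
    rw [Matrix.transpose_smul, Matrix.smul_mul, Matrix.mul_smul, smul_smul, Matrix.trace_smul,
      hFtrace, smul_eq_mul]
    have hss : Real.sqrt F * Real.sqrt F = F := Real.mul_self_sqrt hF0.le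
    rw [div_mul_div_comm, one_mul, hss, one_div, inv_mul_cancel₀ hF0.ne']
  · -- rank
    have h1 : ((1 / Real.sqrt F) • A).rank ≤ A.rank := rank_smul_le' _ _
    have h2 : A.rank ≤ (τ + 1) * n ^ τ := by
      rw [hA]
      unfold Atr
      calc (∑ j ∈ Finset.range (τ + 1), (-1 : ℝ) ^ j •
              ∑ A ∈ Finset.powersetCard j (univ : Finset (Fin n)),
                Matrix.vecMulVec (uvec n k A) (uvec n k A)).rank
          ≤ ∑ j ∈ Finset.range (τ + 1), ((-1 : ℝ) ^ j •
              ∑ A ∈ Finset.powersetCard j (univ : Finset (Fin n)),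
                Matrix.vecMulVec (uvec n k A) (uvec n k A)).rank := rank_sum_le' _ _
        _ ≤ ∑ j ∈ Finset.range (τ + 1), n ^ τ := by
            refine Finset.sum_le_sum fun j hj => ?_
            refine (rank_smul_le' _ _).trans ?_
            refine (rank_sum_le' _ _).trans ?_
            calc ∑ A ∈ Finset.powersetCard j (univ : Finset (Fin n)),
                  (Matrix.vecMulVec (uvec n k A) (uvec n k A)).rank
                ≤ ∑ _A ∈ Finset.powersetCard j (univ : Finset (Fin n)), 1 :=
                  Finset.sum_le_sum fun A _ => _root_.rank_vecMulVec_le _ _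
              _ = (Finset.powersetCard j (univ : Finset (Fin n))).card := by
                  rw [Finset.sum_const, smul_eq_mul, mul_one]
              _ = n.choose j := by
                  rw [Finset.card_powersetCard, Finset.card_univ, Fintype.card_fin]
              _ ≤ n ^ j := Nat.choose_le_pow _ _
              _ ≤ n ^ τ := Nat.pow_le_pow_right (by omega)
                  (by rw [Finset.mem_range] at hj; omega)
        _ = (τ + 1) * n ^ τ := by rw [Finset.sum_const, Finset.card_range, smul_eq_mul]
    have := h1.trans h2
    exact_mod_cast this
  · -- overlap
    have hexp : disjMatrixNormalized n k
        = ((1 : ℝ) / Real.sqrt ((n.choose k * (n - k).choose k : ℕ))) • disjMatrix n k := rfl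
    rw [hexp, Matrix.transpose_smul, Matrix.smul_mul, Matrix.mul_smul, smul_smul,
      Matrix.trace_smul, smul_eq_mul, hDtrace]
    set D : ℝ := (n.choose k : ℝ) * B with hDdef
    have hD0 : 0 < D := mul_pos hNk0 hB0
    have hDn : ((n.choose k * (n - k).choose k : ℕ) : ℝ) = D := by
      rw [hDdef, hBdef]; push_cast; ring
    rw [hDn]
    have key : (1 - ε) ^ 2 * F < D := by
      rw [hFdef, hDdef]
      calc (1 - ε) ^ 2 * ((n.choose k : ℝ) * (B + R))
          = (n.choose k : ℝ) * ((1 - ε) ^ 2 * (B + R)) := by ring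
        _ < (n.choose k : ℝ) * B := by
            refine mul_lt_mul_of_pos_left ?_ hNk0
            rw [hBdef, hRdef] at *
            exact hover
    have h1ε : 0 < 1 - ε := by linarith
    have hsD : 0 < Real.sqrt D := Real.sqrt_pos.2 hD0
    have hsF : 0 < Real.sqrt F := Real.sqrt_pos.2 hF0
    have hlt : (1 - ε) * (Real.sqrt D * Real.sqrt F) < D := by
      have e1 : (1 - ε) * (Real.sqrt D * Real.sqrt F) = Real.sqrt ((1 - ε) ^ 2 * (D * F)) := by
        rw [Real.sqrt_mul (by positivity : (0:ℝ) ≤ (1 - ε) ^ 2) (D * F),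
          Real.sqrt_sq h1ε.le, Real.sqrt_mul hD0.le]
      have e2 : Real.sqrt ((1 - ε) ^ 2 * (D * F)) < Real.sqrt (D * D) := by
        refine Real.sqrt_lt_sqrt (by positivity) ?_
        calc (1 - ε) ^ 2 * (D * F) = ((1 - ε) ^ 2 * F) * D := by ring
          _ < D * D := by exact mul_lt_mul_of_pos_right key hD0
      rw [e1]
      calc Real.sqrt ((1 - ε) ^ 2 * (D * F)) < Real.sqrt (D * D) := e2
        _ = D := Real.sqrt_mul_self hD0.le
    have hform : 1 / Real.sqrt D * (1 / Real.sqrt F) * D = D / (Real.sqrt D * Real.sqrt F) := by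
      field_simp
    rw [gt_iff_lt, hform, lt_div_iff₀ (by positivity)]
    linarith [hlt]

lemma term_bound (n k m τ : ℕ) (hk1 : 1 ≤ k) (hkk : k * k ≤ n) (h4k : 4 * k ≤ n)
    (hm16 : 16 ≤ m) (hmk : m ≤ k) :
    ((k.choose m * (n - k).choose (k - m) : ℕ) : ℝ) * (cval τ m) ^ 2
      ≤ ((n - k).choose k : ℝ) * 2 ^ 20 * (1 / 2) ^ m := by
  have h2k : 2 * k ≤ n := by nlinarith
  set B : ℝ := ((n - k).choose k : ℝ) with hBdef
  have hB0 : 0 < B := by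
    rw [hBdef]; exact_mod_cast Nat.choose_pos (by omega)
  set P : ℝ := ((n - 2 * k + 1 : ℕ) : ℝ) with hPdef
  have hP0 : 0 < P := by rw [hPdef]; exact_mod_cast Nat.succ_pos _
  -- choose ratio bound
  have a3 : ((n - k).choose (k - m) : ℝ) * P ^ m ≤ B * (k : ℝ) ^ m := by
    have h := choose_ratio (n - k) k (by omega) m hmk
    have he : (n - k) - k + 1 = n - 2 * k + 1 := by omega
    rw [he] at h
    rw [hPdef, hBdef]
    exact_mod_cast h
  have b1 : ((n - k).choose (k - m) : ℝ) ≤ B * (k : ℝ) ^ m / P ^ m := by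
    rw [le_div_iff₀ (by positivity)]
    exact a3
  have a2 : ((k.choose m : ℕ) : ℝ) ≤ (k : ℝ) ^ m / (m.factorial : ℝ) :=
    Nat.choose_le_pow_div m k
  have a1 : (cval τ m) ^ 2 ≤ 4 ^ m := by
    have habs := cval_abs_le τ m
    calc (cval τ m) ^ 2 = |cval τ m| ^ 2 := (sq_abs _).symm
      _ ≤ ((2 : ℝ) ^ m) ^ 2 := pow_le_pow_left₀ (abs_nonneg _) habs 2
      _ = 4 ^ m := by rw [← pow_mul, mul_comm, pow_mul]; norm_num
  -- combine
  have step1 : ((k.choose m * (n - k).choose (k - m) : ℕ) : ℝ)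
      ≤ B * ((k : ℝ) * k) ^ m / (P ^ m * (m.factorial : ℝ)) := by
    push_cast
    calc ((k.choose m : ℕ) : ℝ) * ((n - k).choose (k - m) : ℝ)
        ≤ ((k : ℝ) ^ m / (m.factorial : ℝ)) * (B * (k : ℝ) ^ m / P ^ m) :=
          mul_le_mul a2 b1 (by positivity) (by positivity)
      _ = B * ((k : ℝ) * k) ^ m / (P ^ m * (m.factorial : ℝ)) := by
          rw [mul_pow]
          field_simp
  have step2 : ((k.choose m * (n - k).choose (k - m) : ℕ) : ℝ) * (cval τ m) ^ 2
      ≤ B * (4 * ((k : ℝ) * k)) ^ m / (P ^ m * (m.factorial : ℝ)) := by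
    calc ((k.choose m * (n - k).choose (k - m) : ℕ) : ℝ) * (cval τ m) ^ 2
        ≤ (B * ((k : ℝ) * k) ^ m / (P ^ m * (m.factorial : ℝ))) * 4 ^ m :=
          mul_le_mul step1 a1 (by positivity) (by positivity)
      _ = B * (4 * ((k : ℝ) * k)) ^ m / (P ^ m * (m.factorial : ℝ)) := by
          rw [mul_pow]
          ring
  have c1 : 4 * ((k : ℝ) * k) ≤ 8 * P := by
    have h1 : (k * k : ℕ) ≤ n := hkk
    have h2 : (n : ℝ) + 2 ≤ 2 * P := by
      rw [hPdef]
      have : 2 * (n - 2 * k + 1) = 2 * n - 4 * k + 2 := by omega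
      have h3 : ((2 * (n - 2 * k + 1) : ℕ) : ℝ) = 2 * P := by rw [hPdef]; push_cast; ring
      rw [← h3, this]
      have h4 : (2 * n - 4 * k + 2 : ℕ) = (n + 2) + (n - 4 * k) := by omega
      rw [h4]
      push_cast
      linarith [Nat.cast_nonneg (α := ℝ) (n - 4 * k)]
    have h5 : ((k : ℝ) * k) ≤ n := by exact_mod_cast h1
    linarith
  have step3 : B * (4 * ((k : ℝ) * k)) ^ m / (P ^ m * (m.factorial : ℝ))
      ≤ B * 8 ^ m / (m.factorial : ℝ) := by
    have h6 : (4 * ((k : ℝ) * k)) ^ m ≤ (8 * P) ^ m :=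
      pow_le_pow_left₀ (by positivity) c1 m
    calc B * (4 * ((k : ℝ) * k)) ^ m / (P ^ m * (m.factorial : ℝ))
        ≤ B * (8 * P) ^ m / (P ^ m * (m.factorial : ℝ)) := by
          gcongr
      _ = B * 8 ^ m / (m.factorial : ℝ) := by
          rw [mul_pow]
          field_simp
  have step4 : (8 : ℝ) ^ m / (m.factorial : ℝ) ≤ 2 ^ 20 * (1 / 2) ^ m := by
    have hmf : (0 : ℝ) < (m.factorial : ℝ) := by exact_mod_cast m.factorial_pos
    rw [div_le_iff₀ hmf]
    have h2m : (0 : ℝ) < 2 ^ m := by positivity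
    rw [← mul_le_mul_iff_of_pos_right h2m]
    have e1 : (8 : ℝ) ^ m * 2 ^ m = 16 ^ m := by rw [← mul_pow]; norm_num
    have e2 : (2 : ℝ) ^ 20 * (1 / 2) ^ m * (m.factorial : ℝ) * 2 ^ m
        = 2 ^ 20 * (m.factorial : ℝ) := by
      rw [one_div, inv_pow]
      field_simp
    rw [e1, e2]
    exact_mod_cast sixteen_pow_le m hm16
  calc ((k.choose m * (n - k).choose (k - m) : ℕ) : ℝ) * (cval τ m) ^ 2
      ≤ B * 8 ^ m / (m.factorial : ℝ) := step2.trans step3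
    _ = B * (8 ^ m / (m.factorial : ℝ)) := by ring
    _ ≤ B * (2 ^ 20 * (1 / 2) ^ m) := mul_le_mul_of_nonneg_left step4 hB0.le
    _ = B * 2 ^ 20 * (1 / 2) ^ m := by ring

open Matrix in
theorem low_rank_high_overlap_with_disjMatrix :
    ∃ (C : ℝ) (N : ℕ), 0 < C ∧
      ∀ (n : ℕ), N ≤ n → ∀ (ε : ℝ), 0 < ε → ε < 1 →
        ∃ M' : Matrix {S : Finset (Fin n) // S.card = Nat.sqrt n}
            {S : Finset (Fin n) // S.card = Nat.sqrt n} ℝ,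
          M'.IsSymm ∧
          (M'ᵀ * M').trace ≤ 1 ∧
          (M'.rank : ℝ) ≤ (n : ℝ) ^ (C * Real.log (1 / ε)) ∧
          ((disjMatrixNormalized n (Nat.sqrt n))ᵀ * M').trace > 1 - ε := by
  refine ⟨300, 100, by norm_num, ?_⟩
  intro n hn ε hε0 hε1
  set k := Nat.sqrt n with hkdef
  -- basic facts about k
  have hk10 : 10 ≤ k := Nat.le_sqrt.2 (by omega)
  have hkk : k * k ≤ n := by simpa [pow_two] using Nat.sqrt_le' n
  have hk1 : 1 ≤ k := by omega
  have h4k : 4 * k ≤ n := by nlinarith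
  have h2k : 2 * k ≤ n := by nlinarith
  have hn1R : (1 : ℝ) ≤ (n : ℝ) := by
    have : (1 : ℕ) ≤ n := by omega
    exact_mod_cast this
  set L : ℝ := Real.log (1 / ε) with hLdef
  have hL0 : 0 < L := Real.log_pos (one_lt_one_div hε0 hε1)
  set B : ℝ := ((n - k).choose k : ℝ) with hBdef
  have hB0 : 0 < B := by
    rw [hBdef]; exact_mod_cast Nat.choose_pos (by omega)
  rcases le_or_gt ε (3 / 4) with hc | hc
  · -- main case : small ε
    set c : ℕ := ⌈Real.logb 2 (1 / ε)⌉₊ with hcdef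
    set t : ℕ := 64 + 3 * c with htdef
    set τ : ℕ := min t k with hτdef
    -- tail bound
    have hR : ∑ m ∈ Finset.Ico (τ + 1) (k + 1),
        ((k.choose m * (n - k).choose (k - m) : ℕ) : ℝ) * (cval τ m) ^ 2 ≤ ε ^ 2 / 2 * B := by
      rcases le_or_gt t k with htk | htk
      · have hτt : τ = t := min_eq_left htk
        have hhalf : ∑ m ∈ Finset.Ico (τ + 1) (k + 1), ((1 : ℝ) / 2) ^ m
            ≤ 2 * (1 / 2) ^ (τ + 1) := by
          rw [Finset.sum_Ico_eq_sum_range]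
          have : ∀ i, ((1 : ℝ) / 2) ^ (τ + 1 + i) = (1 / 2) ^ (τ + 1) * (1 / 2) ^ i := by
            intro i; rw [pow_add]
          rw [Finset.sum_congr rfl fun i _ => this i, ← Finset.mul_sum]
          calc ((1 : ℝ) / 2) ^ (τ + 1) * ∑ i ∈ Finset.range (k + 1 - (τ + 1)), (1 / 2) ^ i
              ≤ (1 / 2) ^ (τ + 1) * 2 :=
                mul_le_mul_of_nonneg_left (sum_geometric_two_le _) (by positivity)
            _ = 2 * (1 / 2) ^ (τ + 1) := by ring
        have hterm : ∀ m ∈ Finset.Ico (τ + 1) (k + 1),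
            ((k.choose m * (n - k).choose (k - m) : ℕ) : ℝ) * (cval τ m) ^ 2
              ≤ B * 2 ^ 20 * (1 / 2) ^ m := by
          intro m hm
          rw [Finset.mem_Ico] at hm
          exact term_bound n k m τ hk1 hkk h4k (by omega) (by omega)
        calc ∑ m ∈ Finset.Ico (τ + 1) (k + 1),
              ((k.choose m * (n - k).choose (k - m) : ℕ) : ℝ) * (cval τ m) ^ 2
            ≤ ∑ m ∈ Finset.Ico (τ + 1) (k + 1), B * 2 ^ 20 * (1 / 2) ^ m :=
              Finset.sum_le_sum hterm
          _ = B * 2 ^ 20 * ∑ m ∈ Finset.Ico (τ + 1) (k + 1), ((1 : ℝ) / 2) ^ m := by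
              rw [Finset.mul_sum]
          _ ≤ B * 2 ^ 20 * (2 * (1 / 2) ^ (τ + 1)) :=
              mul_le_mul_of_nonneg_left hhalf (by positivity)
          _ ≤ ε ^ 2 / 2 * B := by
              -- (1/2)^(τ+1) = (1/2)*(1/2)^t and (1/2)^t ≤ (1/2)^64 * ε^3
              have hhc : ((1 : ℝ) / 2) ^ c ≤ ε := by
                have e1 : ((1 : ℝ) / 2) ^ (c : ℕ) = ((1 : ℝ) / 2) ^ ((c : ℕ) : ℝ) :=
                  (Real.rpow_natCast _ _).symm
                have e2 : ((1 : ℝ) / 2) ^ ((c : ℕ) : ℝ) ≤ (1 / 2 : ℝ) ^ (Real.logb 2 (1 / ε)) :=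
                  Real.rpow_le_rpow_of_exponent_ge (by norm_num) (by norm_num)
                    (Nat.le_ceil _)
                have e3 : ((1 : ℝ) / 2) ^ (Real.logb 2 (1 / ε)) = ε := by
                  have h12 : (2 : ℝ) ^ (-1 : ℝ) = 1 / 2 := by
                    rw [Real.rpow_neg_one]; norm_num
                  rw [← h12, ← Real.rpow_mul (by norm_num : (0 : ℝ) ≤ 2), neg_one_mul,
                    Real.rpow_neg (by norm_num : (0 : ℝ) ≤ 2),
                    Real.rpow_logb (by norm_num) (by norm_num) (by positivity), one_div, inv_inv]
                calc ((1 : ℝ) / 2) ^ c ≤ ((1 : ℝ) / 2) ^ (Real.logb 2 (1 / ε)) := by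
                      rw [e1]; exact e2
                  _ = ε := e3
              have hτt' : τ = t := hτt
              have hsplit : ((1 : ℝ) / 2) ^ (τ + 1) = (1 / 2) ^ 65 * ((1 / 2) ^ c) ^ 3 := by
                rw [hτt', htdef, show 64 + 3 * c + 1 = 65 + c * 3 by ring, pow_add, pow_mul]
              calc B * 2 ^ 20 * (2 * (1 / 2) ^ (τ + 1))
                  = B * (2 ^ 21 * (1 / 2) ^ 65) * ((1 / 2) ^ c) ^ 3 := by rw [hsplit]; ring
                _ ≤ B * (2 ^ 21 * (1 / 2) ^ 65) * ε ^ 2 := by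
                    refine mul_le_mul_of_nonneg_left ?_ (by positivity)
                    calc (((1 : ℝ) / 2) ^ c) ^ 3 ≤ ε ^ 3 :=
                          pow_le_pow_left₀ (by positivity) hhc 3
                      _ ≤ ε ^ 2 := pow_le_pow_of_le_one hε0.le hε1.le (by omega)
                _ ≤ B * (1 / 2) * ε ^ 2 := by
                    have hq : (2 : ℝ) ^ 21 * (1 / 2) ^ 65 ≤ 1 / 2 := by norm_num
                    gcongr
                _ = ε ^ 2 / 2 * B := by ring
      · have hτk' : τ = k := min_eq_right htk.le
        rw [hτk']
        rw [Finset.Ico_self, Finset.sum_empty]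
        positivity
    -- hover
    have hover : (1 - ε) ^ 2 * (B + ∑ m ∈ Finset.Ico (τ + 1) (k + 1),
        ((k.choose m * (n - k).choose (k - m) : ℕ) : ℝ) * (cval τ m) ^ 2) < B := by
      have h1 : (1 - ε) ^ 2 * (B + ∑ m ∈ Finset.Ico (τ + 1) (k + 1),
          ((k.choose m * (n - k).choose (k - m) : ℕ) : ℝ) * (cval τ m) ^ 2)
          ≤ (1 - ε) ^ 2 * (B + ε ^ 2 / 2 * B) :=
        mul_le_mul_of_nonneg_left (by linarith) (by positivity)
      have key : (1 - ε) ^ 2 * (1 + ε ^ 2 / 2) < 1 := by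
        nlinarith [mul_pos hε0 (show (0:ℝ) < 2 - 3 / 2 * ε by linarith),
          mul_pos (pow_pos hε0 3) (show (0:ℝ) < 1 - ε / 2 by linarith)]
      have h2 : (1 - ε) ^ 2 * (B + ε ^ 2 / 2 * B) < B := by
        calc (1 - ε) ^ 2 * (B + ε ^ 2 / 2 * B) = ((1 - ε) ^ 2 * (1 + ε ^ 2 / 2)) * B := by ring
          _ < 1 * B := mul_lt_mul_of_pos_right key hB0
          _ = B := one_mul B
      linarith
    obtain ⟨M', hs, ht1, hr, ho⟩ := main_aux n k τ ε hε0 hε1 hk1 h2k (min_le_right _ _) hover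
    refine ⟨M', hs, ht1, ?_, ho⟩
    -- rank chain
    calc (M'.rank : ℝ) ≤ (((τ + 1) * n ^ τ : ℕ) : ℝ) := hr
      _ ≤ ((n ^ (τ + 1) : ℕ) : ℝ) := by
          have : (τ + 1) * n ^ τ ≤ n ^ (τ + 1) := by
            rw [pow_succ, mul_comm (n ^ τ) n]
            exact Nat.mul_le_mul_right _ (by omega)
          exact_mod_cast this
      _ = (n : ℝ) ^ ((τ + 1 : ℕ) : ℝ) := by
          rw [Real.rpow_natCast]; push_cast; ring
      _ ≤ (n : ℝ) ^ (300 * L) := by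
          apply Real.rpow_le_rpow_of_exponent_le hn1R
          -- (τ+1 : ℝ) ≤ 300 L
          have hτt : (τ : ℝ) ≤ (t : ℕ) := by exact_mod_cast min_le_left t k
          have hlgb : (0 : ℝ) ≤ Real.logb 2 (1 / ε) :=
            Real.logb_nonneg (by norm_num) (by rw [le_div_iff₀ hε0]; linarith)
          have hceil : (c : ℝ) < Real.logb 2 (1 / ε) + 1 := Nat.ceil_lt_add_one hlgb
          have hlg1 : (0.6931471803 : ℝ) < Real.log 2 := Real.log_two_gt_d9
          have hlg2 : Real.log 2 < 0.6931471808 := Real.log_two_lt_d9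
          have hlogbdef : Real.logb 2 (1 / ε) = L / Real.log 2 := by
            rw [Real.logb, hLdef]
          have hL4 : 1 / 4 ≤ L := by
            have h43 : (4 : ℝ) / 3 ≤ 1 / ε := by
              rw [div_le_div_iff₀ (by norm_num) hε0]; linarith
            have hlog43 : Real.log (4 / 3) ≤ L := by
              rw [hLdef]
              exact Real.log_le_log (by norm_num) h43
            have : (1 : ℝ) / 4 ≤ Real.log (4 / 3) := by
              have h34 : Real.log (3 / 4) ≤ 3 / 4 - 1 :=
                Real.log_le_sub_one_of_pos (by norm_num)
              have hinv : Real.log (4 / 3) = -Real.log (3 / 4) := by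
                rw [show (4 : ℝ) / 3 = (3 / 4)⁻¹ by norm_num, Real.log_inv]
              linarith
            linarith
          have hc0 : (0 : ℝ) ≤ (c : ℕ) := Nat.cast_nonneg c
          -- c * log 2 < L + log 2
          have hclog : (c : ℝ) * Real.log 2 < L + Real.log 2 := by
            have := mul_lt_mul_of_pos_right hceil (by linarith : (0 : ℝ) < Real.log 2)
            rw [hlogbdef] at this
            calc (c : ℝ) * Real.log 2 < (L / Real.log 2 + 1) * Real.log 2 := this
              _ = L + Real.log 2 := by field_simp
          have hlb : 0.6931471803 * (c : ℝ) ≤ (c : ℝ) * Real.log 2 := by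
            rw [mul_comm]
            exact mul_le_mul_of_nonneg_left hlg1.le hc0
          have hτ1 : ((τ : ℕ) : ℝ) + 1 ≤ 65 + 3 * (c : ℝ) := by
            have : ((t : ℕ) : ℝ) = 64 + 3 * (c : ℝ) := by rw [htdef]; push_cast; ring
            linarith
          push_cast
          linarith
  · -- large ε : rank-one (τ = 0)
    have hcval0 : ∀ m, cval 0 m = 1 := by
      intro m
      unfold cval
      simp
    set R0 : ℝ := ∑ m ∈ Finset.Ico (0 + 1) (k + 1),
        ((k.choose m * (n - k).choose (k - m) : ℕ) : ℝ) * (cval 0 m) ^ 2 with hR0def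
    have hvdm : (∑ m ∈ Finset.range (k + 1), k.choose m * (n - k).choose (k - m))
        = n.choose k := by
      have h1 := Nat.add_choose_eq k (n - k) k
      rw [show k + (n - k) = n by omega] at h1
      rw [h1, Finset.Nat.sum_antidiagonal_eq_sum_range_succ
        (fun i j => k.choose i * (n - k).choose j) k]
    have hBR : B + R0 = (n.choose k : ℝ) := by
      have e : B + R0 = ∑ m ∈ Finset.range (k + 1),
          ((k.choose m * (n - k).choose (k - m) : ℕ) : ℝ) := by
        rw [Finset.range_eq_Ico,
          ← Finset.sum_Ico_consecutive _ (by omega : (0:ℕ) ≤ 0 + 1) (by omega : 0 + 1 ≤ k + 1)]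
        have h01 : Finset.Ico (0:ℕ) (0 + 1) = {0} := by ext x; simp [Nat.lt_one_iff]
        have p1 : ∑ m ∈ Finset.Ico (0:ℕ) (0 + 1),
            ((k.choose m * (n - k).choose (k - m) : ℕ) : ℝ) = B := by
          rw [h01, Finset.sum_singleton]
          simp [hBdef]
        have p2 : R0 = ∑ m ∈ Finset.Ico (0 + 1) (k + 1),
            ((k.choose m * (n - k).choose (k - m) : ℕ) : ℝ) := by
          rw [hR0def]
          refine Finset.sum_congr rfl fun m _ => ?_
          rw [hcval0 m]
          ring
        rw [p1, ← p2]
      rw [e]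
      rw [← Nat.cast_sum]
      exact_mod_cast congrArg (Nat.cast : ℕ → ℝ) hvdm
    -- C(n,k) ≤ 16 B
    have h16 : (n.choose k : ℝ) ≤ 16 * B := by
      have h := choose_shift n k h2k k le_rfl
      set P : ℝ := ((n - 2 * k + 1 : ℕ) : ℝ) with hPdef
      have hP0 : 0 < P := by rw [hPdef]; exact_mod_cast Nat.succ_pos _
      set Q : ℝ := ((n - k + 1 : ℕ) : ℝ) with hQdef
      have hQP : Q = P + k := by
        rw [hQdef, hPdef]
        have : (n - k + 1 : ℕ) = (n - 2 * k + 1) + k := by omega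
        rw [this]
        push_cast
        ring
      have hcast : (n.choose k : ℝ) * P ^ k ≤ B * Q ^ k := by
        rw [hPdef, hQdef, hBdef]
        have h' := h
        rw [show n - k = n - k by rfl] at h'
        exact_mod_cast h'
      have h2P : (k : ℝ) * k ≤ 2 * P := by
        have hnk : ((k * k : ℕ) : ℝ) ≤ (n : ℝ) := by exact_mod_cast hkk
        have h2' : (n : ℝ) ≤ 2 * P := by
          rw [hPdef]
          have he : (2 * (n - 2 * k + 1) : ℕ) = n + ((n + 2) - 4 * k) := by omega
          have : ((2 * (n - 2 * k + 1) : ℕ) : ℝ) = 2 * ((n - 2 * k + 1 : ℕ) : ℝ) := by push_cast; ring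
          rw [← this, he]
          push_cast
          linarith [Nat.cast_nonneg (α := ℝ) ((n + 2) - 4 * k)]
        push_cast at hnk
        linarith
      have hQ16 : Q ^ k ≤ 16 * P ^ k := by
        have hx : (0 : ℝ) ≤ (k : ℝ) / P := by positivity
        have e1 : Q = P * (1 + (k : ℝ) / P) := by
          rw [hQP]; field_simp
        have e2 : Q ^ k = P ^ k * (1 + (k : ℝ) / P) ^ k := by rw [e1, mul_pow]
        have e3 : (1 + (k : ℝ) / P) ^ k ≤ Real.exp ((k : ℝ) / P) ^ k := by
          apply pow_le_pow_left₀ (by positivity)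
          linarith [Real.add_one_le_exp ((k : ℝ) / P)]
        have e4 : Real.exp ((k : ℝ) / P) ^ k = Real.exp ((k : ℝ) * ((k : ℝ) / P)) := by
          rw [← Real.exp_nat_mul]
        have e5 : (k : ℝ) * ((k : ℝ) / P) ≤ 2 := by
          rw [mul_div_assoc']
          rw [div_le_iff₀ hP0]
          linarith
        have e6 : Real.exp ((k : ℝ) * ((k : ℝ) / P)) ≤ Real.exp 2 := Real.exp_le_exp.2 e5
        have e7 : Real.exp 2 ≤ 16 := by
          have : Real.exp 2 = Real.exp 1 * Real.exp 1 := by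
            rw [← Real.exp_add]; norm_num
          nlinarith [Real.exp_one_lt_d9, Real.exp_pos 1]
        calc Q ^ k = P ^ k * (1 + (k : ℝ) / P) ^ k := e2
          _ ≤ P ^ k * Real.exp ((k : ℝ) / P) ^ k :=
              mul_le_mul_of_nonneg_left e3 (by positivity)
          _ = P ^ k * Real.exp ((k : ℝ) * ((k : ℝ) / P)) := by rw [e4]
          _ ≤ P ^ k * 16 := mul_le_mul_of_nonneg_left (e6.trans e7) (by positivity)
          _ = 16 * P ^ k := by ring
      have hfinal : (n.choose k : ℝ) * P ^ k ≤ (16 * B) * P ^ k := by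
        calc (n.choose k : ℝ) * P ^ k ≤ B * Q ^ k := hcast
          _ ≤ B * (16 * P ^ k) := mul_le_mul_of_nonneg_left hQ16 hB0.le
          _ = (16 * B) * P ^ k := by ring
      exact le_of_mul_le_mul_right hfinal (by positivity)
    have hover : (1 - ε) ^ 2 * (B + R0) < B := by
      have hlt : (1 - ε) ^ 2 < 1 / 16 := by nlinarith
      calc (1 - ε) ^ 2 * (B + R0) = (1 - ε) ^ 2 * (n.choose k : ℝ) := by rw [hBR]
        _ ≤ (1 - ε) ^ 2 * (16 * B) := mul_le_mul_of_nonneg_left h16 (sq_nonneg _)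
        _ < (1 / 16) * (16 * B) := mul_lt_mul_of_pos_right hlt (by positivity)
        _ = B := by ring
    obtain ⟨M', hs, ht1, hr, ho⟩ := main_aux n k 0 ε hε0 hε1 hk1 h2k (Nat.zero_le k) hover
    refine ⟨M', hs, ht1, ?_, ho⟩
    calc (M'.rank : ℝ) ≤ (((0 + 1) * n ^ 0 : ℕ) : ℝ) := hr
      _ = 1 := by norm_num
      _ ≤ (n : ℝ) ^ (300 * L) := Real.one_le_rpow hn1R (by positivity)
end
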